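/- arXiv:2010.04102 — 6 statements merged into one kernel-verified Lean document; each statement's English description precedes it below -/
import Mathlib

section
/- Consider the linear delay system x_i'(t) = −d_i(t)x_i(t) + Σ_{j=1}^n L_ij(t)(x_j)_t, i = 1,…,n, t > 0, under the stated continuity assumptions on the d_i and L_ij. If hypothesis (H2) holds and each a_ij(t) = ‖L_ij(t)‖ is bounded on [0,∞), then the system is exponentially asymptotically stable: there exist k > 0 and γ > 0 such that for every t₀ ≥ 0, every solution x of the system on [t₀−τ,∞) satisfies |x(t)| ≤ k·e^{−γ(t−t₀)}·‖x_{t₀}‖ for all t ≥ t₀. -/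
open scoped Topology

/-- The segment `x_t ∈ C([-τ,0];E)` of a continuous function `x : ℝ → E`,
given by `x_t(θ) = x(t+θ)`. -/
noncomputable def seg (τ : ℝ) {E : Type*} [TopologicalSpace E] (x : C(ℝ, E)) (t : ℝ) :
    C(Set.Icc (-τ) (0 : ℝ), E) :=
  x.comp ⟨fun θ => t + θ.1, continuous_const.add continuous_subtype_val⟩

/-- The `j`-th component of a continuous `ℝⁿ`-valued function, as a continuous map. -/
noncomputable def proj {n : ℕ} (x : C(ℝ, Fin n → ℝ)) (j : Fin n) : C(ℝ, ℝ) :=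
  ⟨fun s => x s j, (continuous_apply j).comp x.continuous⟩

/-!
The absolute values `|x_i|` are compared with exponential barriers `B_i(t) = c_i e^{ρ (t - t₀)}`.
At the first time some `|x_i|` reaches `B_i`, the delayed terms are bounded by the barriers on the
past window, and a strict differential inequality for the barriers makes `|x_i| - B_i` strictly
decreasing there, although it was nonpositive just before. On `[t₀, t₀ + T]` the bounded
coefficients give growth at a uniform rate `ρ`; from `t₀ + T` on, (H2) lets the barriers
`M v_i e^{-γ t}` work for small `γ > 0`, since the delay only costs a factor `e^{γ τ}` close to `1`.
The growth phase has fixed length `T`, so the two estimates combine into a uniform exponential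
bound.
-/

open Set Filter Real

section Segment

variable {E : Type*} [NormedAddCommGroup E] {τ : ℝ} {x : C(ℝ, E)} {t : ℝ}

theorem norm_le_norm_seg {s : ℝ} (hs : s ∈ Icc (t - τ) t) : ‖x s‖ ≤ ‖seg τ x t‖ := by
  have hθ : s - t ∈ Icc (-τ) (0 : ℝ) := ⟨by linarith [hs.1], by linarith [hs.2]⟩
  simpa [seg] using ContinuousMap.norm_coe_le_norm (seg τ x t) ⟨s - t, hθ⟩

theorem norm_seg_le (hτ : 0 ≤ τ) {M : ℝ} (h : ∀ s ∈ Icc (t - τ) t, ‖x s‖ ≤ M) :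
    ‖seg τ x t‖ ≤ M := by
  have : Nonempty (Icc (-τ) (0 : ℝ)) := ⟨⟨0, by simpa using hτ⟩⟩
  exact (ContinuousMap.norm_le_of_nonempty _).2 fun θ =>
    h (t + θ) ⟨by linarith [θ.2.1], by linarith [θ.2.2]⟩

end Segment

theorem HasDerivAt.nonneg_of_eventually_le_left {f : ℝ → ℝ} {f' a : ℝ} (hf : HasDerivAt f f' a)
    (h : ∀ᶠ y in 𝓝[<] a, f y ≤ f a) : 0 ≤ f' := by
  refine ge_of_tendsto (hasDerivAt_iff_tendsto_slope_left_right.1 hf).1 ?_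
  filter_upwards [h, self_mem_nhdsWithin] with y hy hya
  rw [slope_def_field]
  exact div_nonneg_of_nonpos (sub_nonpos.2 hy) (sub_nonpos.2 (le_of_lt hya))

theorem sign_mul_le_abs (a b : ℝ) : (SignType.sign a : ℝ) * b ≤ |b| := by
  rcases lt_trichotomy a 0 with h | h | h <;> simp [h, neg_le_abs, le_abs_self]

theorem exists_first_crossing {ι : Type*} [Finite ι] {f g : ι → ℝ → ℝ}
    (hf : ∀ i, Continuous (f i)) (hg : ∀ i, Continuous (g i)) {a : ℝ}
    (ha : ∀ i, f i a < g i a) (hcross : ∃ b ≥ a, ∃ i, g i b ≤ f i b) :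
    ∃ s > a, (∃ i, f i s = g i s) ∧ ∀ r ∈ Icc a s, ∀ j, f j r ≤ g j r := by
  set S := Ici a ∩ ⋃ i, {t | g i t ≤ f i t}
  have hS : IsClosed S :=
    isClosed_Ici.inter (isClosed_iUnion_of_finite fun i => isClosed_le (hg i) (hf i))
  have hSne : S.Nonempty := by
    obtain ⟨b, hb, i, hi⟩ := hcross
    exact ⟨b, hb, mem_iUnion.2 ⟨i, hi⟩⟩
  have hSbdd : BddBelow S := ⟨a, fun t ht => ht.1⟩
  obtain ⟨hsa, hsS⟩ := hS.csInf_mem hSne hSbdd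
  obtain ⟨i, hi⟩ := mem_iUnion.1 hsS
  set s := sInf S
  have has : a < s := hsa.lt_of_ne fun h => (ha i).not_ge (h ▸ hi)
  have hbefore : Ico a s ⊆ ⋂ j, {r | f j r ≤ g j r} := fun r hr => mem_iInter.2 fun j =>
    show f j r ≤ g j r from not_lt.1 fun hj =>
      (csInf_le hSbdd ⟨hr.1, mem_iUnion.2 ⟨j, hj.le⟩⟩).not_gt hr.2
  have hupto : Icc a s ⊆ ⋂ j, {r | f j r ≤ g j r} := by
    rw [← closure_Ico has.ne]
    exact (isClosed_iInter fun j => isClosed_le (hf j) (hg j)).closure_subset_iff.2 hbefore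
  exact ⟨s, has, ⟨i, (mem_iInter.1 (hupto ⟨hsa, le_rfl⟩) i).antisymm hi⟩,
    fun r hr => mem_iInter.1 (hupto hr)⟩

theorem norm_seg_le_of_abs_le_mul_exp {y : C(ℝ, ℝ)} {τ t₀ t c ρ E : ℝ} (hτ : 0 ≤ τ)
    (ht : t₀ ≤ t) (hE : ∀ u ∈ Icc 0 τ, exp (-ρ * u) ≤ E)
    (hinit : ∀ s ∈ Icc (t₀ - τ) t₀, |y s| ≤ c)
    (hbound : ∀ s ∈ Icc t₀ t, |y s| ≤ c * exp (ρ * (s - t₀))) :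
    ‖seg τ y t‖ ≤ E * (c * exp (ρ * (t - t₀))) := by
  have hc : 0 ≤ c := (abs_nonneg _).trans (hinit t₀ ⟨by linarith, le_rfl⟩)
  have hdelay : ∀ u ∈ Icc 0 τ, c * exp (ρ * (t - u - t₀)) ≤ E * (c * exp (ρ * (t - t₀))) := by
    intro u hu
    calc c * exp (ρ * (t - u - t₀)) = c * exp (ρ * (t - t₀)) * exp (-ρ * u) := by
          rw [mul_assoc, ← exp_add]; ring_nf
      _ ≤ c * exp (ρ * (t - t₀)) * E := by gcongr; exact hE u hu
      _ = E * (c * exp (ρ * (t - t₀))) := mul_comm _ _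
  refine norm_seg_le hτ fun s hs => ?_
  rw [Real.norm_eq_abs]
  rcases le_or_gt t₀ s with hs₀ | hs₀
  · calc |y s| ≤ c * exp (ρ * (t - (t - s) - t₀)) := by
          simpa using hbound s ⟨hs₀, hs.2⟩
      _ ≤ _ := hdelay (t - s) ⟨by linarith [hs.2], by linarith [hs.1]⟩
  · calc |y s| ≤ c * exp (ρ * (t - (t - t₀) - t₀)) := by
          simpa using hinit s ⟨by linarith [hs.1], hs₀.le⟩
      _ ≤ _ := hdelay (t - t₀) ⟨by linarith, by linarith [hs.1]⟩

def IsDelaySolution {n : ℕ} {τ : ℝ} (d : Fin n → ℝ → ℝ)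
    (L : Fin n → Fin n → ℝ → (C(Icc (-τ) (0 : ℝ), ℝ) →L[ℝ] ℝ)) (t₀ : ℝ)
    (x : C(ℝ, Fin n → ℝ)) : Prop :=
  ∀ i, ∀ t > t₀, HasDerivAt (fun s => x s i)
    (-(d i t) * x t i + ∑ j, L i j t (seg τ (proj x j) t)) t

namespace IsDelaySolution

variable {n : ℕ} {τ : ℝ} {d : Fin n → ℝ → ℝ}
  {L : Fin n → Fin n → ℝ → (C(Icc (-τ) (0 : ℝ), ℝ) →L[ℝ] ℝ)} {t₀ : ℝ} {x : C(ℝ, Fin n → ℝ)}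

theorem mono (hx : IsDelaySolution d L t₀ x) {t₁ : ℝ} (ht₁ : t₀ ≤ t₁) :
    IsDelaySolution d L t₁ x :=
  fun i t ht => hx i t (ht₁.trans_lt ht)

/-- Since `e^{-ρ u} ≤ E` on `[0, τ]`, each barrier `c_j e^{ρ s}` stays below `E` times its present
value over the past delay interval; `hc` then makes the barriers a strict supersolution. -/
theorem abs_apply_lt_mul_exp (hx : IsDelaySolution d L t₀ x) (hτ : 0 ≤ τ) {c : Fin n → ℝ}
    {ρ E : ℝ} (hE : ∀ u ∈ Icc 0 τ, exp (-ρ * u) ≤ E)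
    (hinit : ∀ i, ∀ s ∈ Icc (t₀ - τ) t₀, |x s i| < c i)
    (hc : ∀ t ≥ t₀, ∀ i, -(d i t) * c i + E * ∑ j, ‖L i j t‖ * c j < ρ * c i) :
    ∀ t ≥ t₀, ∀ i, |x t i| < c i * exp (ρ * (t - t₀)) := by
  by_contra! hfail
  set B : Fin n → ℝ → ℝ := fun j s => c j * exp (ρ * (s - t₀)) with hB
  obtain ⟨t, ht, ⟨i, hi⟩, hle⟩ := exists_first_crossing (f := fun j s => |x s j|) (g := B)
    (fun j => by fun_prop) (fun j => by fun_prop)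
    (fun j => by simpa [B] using hinit j t₀ ⟨by linarith, le_rfl⟩) hfail
  have hseg : ∀ j, ‖seg τ (proj x j) t‖ ≤ E * B j t := fun j =>
    norm_seg_le_of_abs_le_mul_exp hτ ht.le hE (fun s hs => (hinit j s hs).le)
      (fun s hs => hle s hs j)
  have hBi : 0 < B i t :=
    mul_pos ((abs_nonneg _).trans_lt (hinit i t₀ ⟨by linarith, le_rfl⟩)) (exp_pos _)
  have hxi : x t i ≠ 0 := abs_pos.1 (hi ▸ hBi)
  set x' := -(d i t) * x t i + ∑ j, L i j t (seg τ (proj x j) t)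
  have hderiv : HasDerivAt (fun s => |x s i| - B i s)
      (SignType.sign (x t i) * x' - ρ * B i t) t := by
    refine ((hasDerivAt_abs hxi).comp t (hx i t (by linarith))).sub ?_
    have := (((hasDerivAt_id t).sub_const t₀).const_mul ρ).exp.const_mul (c i)
    simp only [id, mul_one] at this
    exact this.congr_deriv (by simp only [hB]; ring)
  have hdelayed : SignType.sign (x t i) * ∑ j, L i j t (seg τ (proj x j) t) ≤
      ∑ j, ‖L i j t‖ * (E * B j t) :=
    (sign_mul_le_abs _ _).trans <| (Finset.abs_sum_le_sum_abs _ _).trans <|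
      Finset.sum_le_sum fun j _ =>
        ((L i j t).le_opNorm _).trans (mul_le_mul_of_nonneg_left (hseg j) (norm_nonneg _))
  have hneg : SignType.sign (x t i) * x' - ρ * B i t < 0 :=
    calc SignType.sign (x t i) * x' - ρ * B i t
        = -(d i t) * B i t + SignType.sign (x t i) * ∑ j, L i j t (seg τ (proj x j) t)
          - ρ * B i t := by
          rw [← hi, mul_add, ← sign_mul_self]; ring
      _ ≤ -(d i t) * B i t + ∑ j, ‖L i j t‖ * (E * B j t) - ρ * B i t := by gcongr
      _ = (-(d i t) * c i + E * ∑ j, ‖L i j t‖ * c j - ρ * c i) * exp (ρ * (t - t₀)) := by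
          have hsum : ∑ j, ‖L i j t‖ * (E * B j t) =
              E * (∑ j, ‖L i j t‖ * c j) * exp (ρ * (t - t₀)) := by
            rw [Finset.mul_sum, Finset.sum_mul]
            exact Finset.sum_congr rfl fun j _ => by ring
          rw [hsum]; ring
      _ < 0 := mul_neg_of_neg_of_pos (by linarith [hc t ht.le i]) (exp_pos _)
  refine hneg.not_ge (hderiv.nonneg_of_eventually_le_left ?_)
  filter_upwards [Ioo_mem_nhdsLT ht] with s hs
  simpa [hi] using hle s ⟨hs.1.le, hs.2.le⟩ i

theorem abs_apply_lt_mul_exp_of_sum_norm_lt (hx : IsDelaySolution d L t₀ x) (hτ : 0 ≤ τ)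
    (hd : ∀ t ≥ t₀, ∀ i, 0 ≤ d i t) {ρ : ℝ} (hρ : 0 ≤ ρ)
    (hL : ∀ t ≥ t₀, ∀ i, ∑ j, ‖L i j t‖ < ρ) {M : ℝ}
    (hinit : ∀ i, ∀ s ∈ Icc (t₀ - τ) t₀, |x s i| < M) :
    ∀ t ≥ t₀, ∀ i, |x t i| < M * exp (ρ * (t - t₀)) := by
  refine hx.abs_apply_lt_mul_exp hτ (c := fun _ => M) (E := 1)
    (fun u hu => exp_le_one_iff.2 (by nlinarith [hu.1])) hinit fun t ht i => ?_
  have hM : 0 < M := (abs_nonneg _).trans_lt (hinit i t₀ ⟨by linarith, le_rfl⟩)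
  rw [← Finset.sum_mul, one_mul]
  nlinarith [mul_lt_mul_of_pos_right (hL t ht i) hM, mul_nonneg (hd t ht i) hM.le]

theorem abs_apply_lt_mul_exp_neg_of_diag_dominant (hx : IsDelaySolution d L t₀ x) (hτ : 0 ≤ τ)
    {v S : Fin n → ℝ} {δ γ : ℝ} (hv : ∀ i, 0 < v i)
    (hdom : ∀ t ≥ t₀, ∀ i, δ * v i ≤ d i t * v i - ∑ j, ‖L i j t‖ * v j)
    (hS : ∀ t ≥ t₀, ∀ i, ∑ j, ‖L i j t‖ * v j ≤ S i)
    (hγ : 0 ≤ γ) (hγS : ∀ i, (exp (γ * τ) - 1) * S i + γ * v i < δ * v i) {M : ℝ}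
    (hinit : ∀ i, ∀ s ∈ Icc (t₀ - τ) t₀, |x s i| < M * v i) :
    ∀ t ≥ t₀, ∀ i, |x t i| < M * v i * exp (-γ * (t - t₀)) := by
  refine hx.abs_apply_lt_mul_exp hτ (c := fun i => M * v i) (E := exp (γ * τ))
    (fun u hu => exp_le_exp.2 (by nlinarith [hu.2])) hinit fun t ht i => ?_
  have hM : 0 < M := pos_of_mul_pos_left ((abs_nonneg _).trans_lt
    (hinit i t₀ ⟨by linarith, le_rfl⟩)) (hv i).le
  have hexp : 1 ≤ exp (γ * τ) := one_le_exp (mul_nonneg hγ hτ)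
  have hrow : exp (γ * τ) * ∑ j, ‖L i j t‖ * v j ≤
      (d i t * v i - δ * v i) + (exp (γ * τ) - 1) * S i := by
    nlinarith [hdom t ht i, mul_le_mul_of_nonneg_left (hS t ht i) (sub_nonneg.2 hexp)]
  have : ∑ j, ‖L i j t‖ * (M * v j) = M * ∑ j, ‖L i j t‖ * v j := by
    rw [Finset.mul_sum]; exact Finset.sum_congr rfl fun j _ => by ring
  rw [this]
  nlinarith [mul_lt_mul_of_pos_left (hγS i) hM, mul_le_mul_of_nonneg_left hrow hM.le]

theorem abs_apply_lt_of_norm_seg_lt (hx : IsDelaySolution d L t₀ x) (hτ : 0 ≤ τ) {T : ℝ}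
    (hT : 0 ≤ T) (hd : ∀ t ≥ t₀, ∀ i, 0 ≤ d i t) {ρ : ℝ} (hρ : 0 ≤ ρ)
    (hL : ∀ t ≥ t₀, ∀ i, ∑ j, ‖L i j t‖ < ρ) {v S : Fin n → ℝ} {δ γ m : ℝ}
    (hdom : ∀ t ≥ t₀ + T, ∀ i, δ * v i ≤ d i t * v i - ∑ j, ‖L i j t‖ * v j)
    (hS : ∀ t ≥ t₀ + T, ∀ i, ∑ j, ‖L i j t‖ * v j ≤ S i)
    (hγ : 0 ≤ γ) (hγS : ∀ i, (exp (γ * τ) - 1) * S i + γ * v i < δ * v i)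
    (hm : 0 < m) (hmv : ∀ i, m ≤ v i) {M : ℝ} (hM : ‖seg τ x t₀‖ < M) :
    ∀ t ≥ t₀, ∀ i, |x t i| < M * exp (ρ * T) / m * v i * exp (-γ * (t - (t₀ + T))) := by
  have hinit : ∀ i, ∀ s ∈ Icc (t₀ - τ) t₀, |x s i| < M := fun i s hs =>
    ((norm_le_pi_norm (x s) i).trans (norm_le_norm_seg hs)).trans_lt hM
  have hgrowth := hx.abs_apply_lt_mul_exp_of_sum_norm_lt hτ hd hρ hL hinit
  have hMe : 0 ≤ M * exp (ρ * T) := mul_nonneg ((norm_nonneg _).trans hM.le) (exp_pos _).le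
  have hscale : ∀ i, M * exp (ρ * T) ≤ M * exp (ρ * T) / m * v i := fun i => by
    rw [div_mul_eq_mul_div, le_div_iff₀ hm]
    exact mul_le_mul_of_nonneg_left (hmv i) hMe
  have hupto : ∀ i, ∀ s ∈ Icc (t₀ - τ) (t₀ + T), |x s i| < M * exp (ρ * T) / m * v i := by
    intro i s hs
    refine lt_of_lt_of_le ?_ (hscale i)
    rcases le_or_gt t₀ s with hs₀ | hs₀
    · calc |x s i| < M * exp (ρ * (s - t₀)) := hgrowth s hs₀ i
        _ ≤ M * exp (ρ * T) := by
            gcongr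
            · exact (abs_nonneg _).trans (hinit i t₀ ⟨by linarith, le_rfl⟩).le
            · linarith [hs.2]
    · calc |x s i| < M := hinit i s ⟨hs.1, hs₀.le⟩
        _ ≤ M * exp (ρ * T) := le_mul_of_one_le_right ((norm_nonneg _).trans hM.le)
            (one_le_exp (mul_nonneg hρ hT))
  have hdecay := (hx.mono (by linarith : t₀ ≤ t₀ + T)).abs_apply_lt_mul_exp_neg_of_diag_dominant
    hτ (fun i => hm.trans_le (hmv i)) hdom hS hγ hγS
    fun i s hs => hupto i s ⟨by linarith [hs.1], hs.2⟩
  intro t ht i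
  rcases le_or_gt (t₀ + T) t with ht₁ | ht₁
  · exact hdecay t ht₁ i
  · calc |x t i| < M * exp (ρ * T) / m * v i := hupto i t ⟨by linarith, ht₁.le⟩
      _ ≤ _ := le_mul_of_one_le_right (hMe.trans (hscale i)) (one_le_exp (by nlinarith))

end IsDelaySolution

theorem exists_pos_exp_sub_one_mul_add_lt {ι : Type*} [Finite ι] (τ : ℝ) (S w r : ι → ℝ)
    (hr : ∀ i, 0 < r i) : ∃ γ > 0, ∀ i, (exp (γ * τ) - 1) * S i + γ * w i < r i := by
  have hsmall : ∀ i, ∀ᶠ γ in 𝓝[>] (0 : ℝ), (exp (γ * τ) - 1) * S i + γ * w i < r i := by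
    intro i
    have : Tendsto (fun γ => (exp (γ * τ) - 1) * S i + γ * w i) (𝓝 0) (𝓝 0) := by
      simpa using (show Continuous fun γ => (exp (γ * τ) - 1) * S i + γ * w i by
        fun_prop).tendsto 0
    exact nhdsWithin_le_nhds (this.eventually (eventually_lt_nhds (hr i)))
  obtain ⟨γ, hγ, hγ0⟩ := ((eventually_all.2 hsmall).and self_mem_nhdsWithin).exists
  exact ⟨γ, hγ0, hγ⟩

theorem le_mul_of_forall_gt_le_mul {a b c : ℝ} (h : ∀ M > b, a ≤ c * M) : a ≤ c * b :=
  ge_of_tendsto ((continuous_const.mul continuous_id).tendsto b |>.mono_left nhdsWithin_le_nhds)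
    (eventually_nhdsWithin_of_forall (s := Ioi b) h)

theorem linear_exp_stable_H2_bounded_general
    (n : ℕ) (hn : 1 ≤ n) (τ : ℝ) (hτ : 0 ≤ τ)
    (d : Fin n → ℝ → ℝ)
    (L : Fin n → Fin n → ℝ → (C(Set.Icc (-τ) (0 : ℝ), ℝ) →L[ℝ] ℝ))
    -- (H1): continuity of the data
    (hd_pos : ∀ i, ∀ t ≥ (0 : ℝ), 0 < d i t)
    -- (H2): ∃ v > 0, δ > 0 with (D(t) - A(t) - δ I) v ≥ 0 componentwise for t ≥ T
    (v : Fin n → ℝ) (hv : ∀ i, 0 < v i) (δ : ℝ) (hδ : 0 < δ) (T : ℝ) (hT : 0 ≤ T)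
    (hH2 : ∀ t ≥ T, ∀ i, δ * v i ≤ d i t * v i - ∑ j, ‖L i j t‖ * v j)
    -- each a_ij(t) = ‖L_ij(t)‖ is bounded on [0,∞)
    (hbdd : ∀ i j, ∃ K, ∀ t ≥ (0 : ℝ), ‖L i j t‖ ≤ K) :
    ∃ k > 0, ∃ γ > 0, ∀ t₀ ≥ (0 : ℝ), ∀ x : C(ℝ, Fin n → ℝ),
      (∀ i, ∀ t > t₀, HasDerivAt (fun s => x s i)
          (-(d i t) * x t i + ∑ j, L i j t (seg τ (proj x j) t)) t) →
      ∀ t ≥ t₀, ‖x t‖ ≤ k * Real.exp (-γ * (t - t₀)) * ‖seg τ x t₀‖ := by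
  have : Nonempty (Fin n) := Fin.pos_iff_nonempty.mp hn
  choose K hK using hbdd
  obtain ⟨ρ, hρ⟩ := Finite.exists_le fun i => ∑ j, K i j
  obtain ⟨γ, hγ, hγS⟩ := exists_pos_exp_sub_one_mul_add_lt τ (fun i => ∑ j, K i j * v j) v
    (fun i => δ * v i) fun i => mul_pos hδ (hv i)
  obtain ⟨i₀, hi₀⟩ := Finite.exists_min v
  obtain ⟨i₁, hi₁⟩ := Finite.exists_max v
  set ρ' := max ρ 0 + 1
  have hk : 0 < exp (ρ' * T) / v i₀ * v i₁ * exp (γ * T) := by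
    have := hv i₀; have := hv i₁; positivity
  refine ⟨_, hk, γ, hγ, fun t₀ ht₀ x hx t ht => le_mul_of_forall_gt_le_mul fun M hM => ?_⟩
  have hbound := IsDelaySolution.abs_apply_lt_of_norm_seg_lt (ρ := ρ') hx hτ hT
    (fun t ht i => (hd_pos i t (ht₀.trans ht)).le) (by positivity)
    (fun t ht i => (Finset.sum_le_sum fun j _ => hK i j t (ht₀.trans ht)).trans_lt
      (by linarith [hρ i, le_max_left ρ 0]))
    (fun t ht => hH2 t (by linarith))
    (fun t ht i => Finset.sum_le_sum fun j _ =>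
      mul_le_mul_of_nonneg_right (hK i j t (by linarith)) (hv j).le) hγ.le hγS (hv i₀) hi₀ hM t ht
  have hM₀ : 0 < M := (norm_nonneg _).trans_lt hM
  refine (pi_norm_le_iff_of_nonneg (mul_pos (mul_pos hk (exp_pos _)) hM₀).le).2 fun i =>
    (hbound i).le.trans ?_
  calc M * exp (ρ' * T) / v i₀ * v i * exp (-γ * (t - (t₀ + T)))
      ≤ M * exp (ρ' * T) / v i₀ * v i₁ * exp (-γ * (t - (t₀ + T))) := by
        have := hv i₀
        gcongr
        exact hi₁ i
    _ = _ := by rw [show -γ * (t - (t₀ + T)) = γ * T + -γ * (t - t₀) by ring, exp_add]; ring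

/-- Under (H1) and (H2), if all `a_ij(t) = ‖L_ij(t)‖` are bounded on `[0,∞)`, the linear
delay system `x_i'(t) = -d_i(t) x_i(t) + ∑_j L_ij(t) (x_j)_t` is exponentially
asymptotically stable. -/
theorem linear_exp_stable_H2_bounded
    (n : ℕ) (hn : 1 ≤ n) (τ : ℝ) (hτ : 0 ≤ τ)
    (d : Fin n → ℝ → ℝ)
    (L : Fin n → Fin n → ℝ → (C(Set.Icc (-τ) (0 : ℝ), ℝ) →L[ℝ] ℝ))
    -- (H1): continuity of the data
    (hd_pos : ∀ i, ∀ t ≥ (0 : ℝ), 0 < d i t)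
    (hd_cont : ∀ i, ContinuousOn (d i) (Set.Ici 0))
    (hL_cont : ∀ i j, ContinuousOn (L i j) (Set.Ici (0 : ℝ)))
    -- (H2): ∃ v > 0, δ > 0 with (D(t) - A(t) - δ I) v ≥ 0 componentwise for t ≥ T
    (v : Fin n → ℝ) (hv : ∀ i, 0 < v i) (δ : ℝ) (hδ : 0 < δ) (T : ℝ) (hT : 0 ≤ T)
    (hH2 : ∀ t ≥ T, ∀ i, δ * v i ≤ d i t * v i - ∑ j, ‖L i j t‖ * v j)
    -- each a_ij(t) = ‖L_ij(t)‖ is bounded on [0,∞)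
    (hbdd : ∀ i j, ∃ K, ∀ t ≥ (0 : ℝ), ‖L i j t‖ ≤ K) :
    ∃ k > 0, ∃ γ > 0, ∀ t₀ ≥ (0 : ℝ), ∀ x : C(ℝ, Fin n → ℝ),
      (∀ i, ∀ t > t₀, HasDerivAt (fun s => x s i)
          (-(d i t) * x t i + ∑ j, L i j t (seg τ (proj x j) t)) t) →
      ∀ t ≥ t₀, ‖x t‖ ≤ k * Real.exp (-γ * (t - t₀)) * ‖seg τ x t₀‖ :=
  linear_exp_stable_H2_bounded_general n hn τ hτ d L hd_pos v hv δ hδ T hT hH2 hbdd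
end

section
/- Consider the linear delay system x_i'(t) = −d_i(t)x_i(t) + Σ_{j=1}^n L_ij(t)(x_j)_t, i = 1,…,n, t > 0, under the stated continuity assumptions on the d_i and L_ij. If hypothesis (H2*) holds and liminf_{t→∞} d_i(t) > 0 for every i = 1,…,n, then the system is exponentially asymptotically stable: there exist k > 0 and γ > 0 such that for every t₀ ≥ 0, every solution x of the system on [t₀−τ,∞) satisfies |x(t)| ≤ k·e^{−γ(t−t₀)}·‖x_{t₀}‖ for all t ≥ t₀. -/
open scoped Topology

open Set Filter Topology

/-!
Measure the solution in the weighted norm `max_i |x_i| / v_i`. A first-crossing argument shows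
that a bound `|x_i(t)| ≤ v_i C e^{ρ (t - p)}` on the initial window `[p - τ, p]` persists as long
as `κ ∑_j ‖L_ij(t)‖ v_j < (d_i(t) + ρ) v_i`, where `κ` bounds `e^{ρ θ}` over the delay window
`θ ∈ [-τ, 0]`: at a first contact time the right-hand side of the system pushes `x_i / v_i` back
inside the barrier. On the compact interval `[0, T₁]` the continuity of the `L_ij` makes this hold
with a large growth rate `ρ = Λ`; beyond `T₁`, (H2*) together with `d_i ≥ c > 0` makes it hold with
a small decay rate `ρ = -γ`, because `e^{γτ} / α < 1`. Chaining the two barriers gives the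
exponential estimate.
-/

theorem abs_lt_iff_forall_units_mul {R : Type*} [Ring R] [LinearOrder R] [IsOrderedRing R]
    {a b : R} : |a| < b ↔ ∀ ε : ℤˣ, ((ε : ℤ) : R) * a < b := by
  refine ⟨fun h ε => ?_, fun h => abs_lt.2 ⟨neg_lt.1 (by simpa using h (-1)), by simpa using h 1⟩⟩
  rcases Int.units_eq_one_or ε with rfl | rfl <;> simp [(abs_lt.1 h).2, neg_lt.1 (abs_lt.1 h).1]

theorem abs_le_iff_forall_units_mul {R : Type*} [Ring R] [LinearOrder R] [IsOrderedRing R]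
    {a b : R} : |a| ≤ b ↔ ∀ ε : ℤˣ, ((ε : ℤ) : R) * a ≤ b := by
  refine ⟨fun h ε => ?_, fun h => abs_le.2 ⟨neg_le.1 (by simpa using h (-1)), by simpa using h 1⟩⟩
  rcases Int.units_eq_one_or ε with rfl | rfl <;> simp [(abs_le.1 h).2, neg_le.1 (abs_le.1 h).1]

theorem HasDerivAt.nonneg_of_eventually_le_left_s1 {g : ℝ → ℝ} {g' t : ℝ} (hg : HasDerivAt g g' t)
    (hle : ∀ᶠ s in 𝓝[<] t, g s ≤ g t) : 0 ≤ g' :=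
  ge_of_tendsto (hasDerivAt_iff_tendsto_slope_left_right.1 hg).1 <| by
    filter_upwards [hle, self_mem_nhdsWithin] with s hs hst
    rw [slope_def_field]
    exact div_nonneg_of_nonpos (sub_nonpos.2 hs) (sub_neg.2 hst).le

theorem lt_of_first_crossing {κ : Type*} [Finite κ] {τ : ℝ} (hτ : 0 ≤ τ) {z : κ → ℝ → ℝ}
    (hz : ∀ k, Continuous (z k)) {u u' : ℝ → ℝ} (hu : ∀ t, HasDerivAt u (u' t) t) {p q : ℝ}
    (hinit : ∀ k, ∀ s ∈ Icc (p - τ) p, z k s < u s)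
    (hstep : ∀ t ∈ Ioc p q, ∀ k, (∀ j, ∀ s ∈ Icc (t - τ) t, z j s ≤ u s) → z k t = u t →
      ∃ z', HasDerivAt (z k) z' t ∧ z' < u' t) :
    ∀ t ∈ Icc p q, ∀ k, z k t < u t := by
  have hucont : Continuous u := continuous_iff_continuousAt.2 fun t => (hu t).continuousAt
  by_contra! hcon
  set S := Icc p q ∩ ⋃ k, {s | u s ≤ z k s}
  have hS : IsClosed S := isClosed_Icc.inter <| isClosed_iUnion_of_finite fun k =>
    isClosed_le hucont (hz k)
  have hSne : S.Nonempty := by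
    obtain ⟨t, ht, k, hk⟩ := hcon
    exact ⟨t, ht, mem_iUnion.2 ⟨k, hk⟩⟩
  have hSbdd : BddBelow S := ⟨p, fun s hs => hs.1.1⟩
  obtain ⟨⟨hpt, htq⟩, hcontact⟩ := hS.csInf_mem hSne hSbdd
  set t := sInf S
  obtain ⟨k, hk⟩ := mem_iUnion.1 hcontact
  have hbefore : ∀ j, ∀ s ∈ Ico p t, z j s < u s := fun j s hs => not_le.1 fun hsj =>
    (csInf_le hSbdd ⟨⟨hs.1, hs.2.le.trans htq⟩, mem_iUnion.2 ⟨j, hsj⟩⟩).not_gt hs.2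
  have hpt' : p < t := hpt.lt_of_ne fun hp => (hinit k p ⟨by linarith, le_rfl⟩).not_ge (hp ▸ hk)
  have hleft : Ioo p t ∈ 𝓝[<] t := Ioo_mem_nhdsLT hpt'
  have hat : ∀ j, z j t ≤ u t := fun j => sub_nonpos.1 <|
    le_of_tendsto (((hz j).sub hucont).tendsto t |>.mono_left nhdsWithin_le_nhds) <| by
      filter_upwards [hleft] with s hs using sub_nonpos.2 (hbefore j s ⟨hs.1.le, hs.2⟩).le
  have hwindow : ∀ j, ∀ s ∈ Icc (t - τ) t, z j s ≤ u s := by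
    intro j s hs
    rcases lt_or_ge s p with hsp | hps
    · exact (hinit j s ⟨by linarith [hs.1], hsp.le⟩).le
    rcases hs.2.lt_or_eq with hst | rfl
    · exact (hbefore j s ⟨hps, hst⟩).le
    · exact hat j
  have heq : z k t = u t := le_antisymm (hat k) hk
  obtain ⟨z', hz', hlt⟩ := hstep t ⟨hpt', htq⟩ k hwindow heq
  have hmono : 0 ≤ z' - u' t := (hz'.sub (hu t)).nonneg_of_eventually_le_left_s1 <| by
    filter_upwards [hleft] with s hs
    simp only [Pi.sub_apply]
    linarith [hbefore k s ⟨hs.1.le, hs.2⟩]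
  linarith

theorem exists_pos_forall_lt_mul_of_isCompact {ι : Type*} [Finite ι] {K : Set ℝ}
    (hK : IsCompact K) {f : ι → ℝ → ℝ} (hf : ∀ i, ContinuousOn (f i) K) {w : ι → ℝ}
    (hw : ∀ i, 0 < w i) : ∃ Λ > 0, ∀ t ∈ K, ∀ i, f i t < Λ * w i := by
  have hbound : ∀ i, ∀ᶠ Λ in atTop, ∀ t ∈ K, f i t < Λ * w i := fun i => by
    obtain ⟨B, hB⟩ := hK.bddAbove_image (hf i)
    filter_upwards [(tendsto_id.atTop_mul_const (hw i)).eventually_gt_atTop B] with Λ hΛ t ht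
    exact (hB ⟨t, ht, rfl⟩).trans_lt hΛ
  obtain ⟨Λ, hΛ, hpos⟩ := ((eventually_all.2 hbound).and (eventually_gt_atTop 0)).exists
  exact ⟨Λ, hpos, fun t ht i => hΛ i t ht⟩

theorem exists_decay_rate {ι : Type*} [Finite ι] (τ : ℝ) {α : ℝ} (hα : 1 < α)
    {a d : ι → ℝ → ℝ} {w : ι → ℝ} (hw : ∀ i, 0 < w i) (ha : ∀ i t, 0 ≤ a i t)
    (hdom : ∀ᶠ t in atTop, ∀ i, α * a i t ≤ d i t * w i)
    (hd : ∀ i, ∃ c > 0, ∀ᶠ t in atTop, c ≤ d i t) :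
    ∃ γ > 0, ∀ᶠ t in atTop, ∀ i, Real.exp (γ * τ) * a i t < (d i t - γ) * w i := by
  choose c hc hcd using hd
  have hα' : 0 < (α - 1) / (2 * α) := div_pos (by linarith) (by linarith)
  -- Once `exp (γ τ) ≤ (1 + α) / 2`, domination by `α` leaves the margin `d (α - 1) / (2 α)`.
  have hexp : ∀ᶠ γ in 𝓝 (0 : ℝ), Real.exp (γ * τ) < (1 + α) / 2 :=
    (Continuous.tendsto (by fun_prop) 0).eventually_lt_const (by simp; linarith)
  have hsmall : ∀ᶠ γ in 𝓝 (0 : ℝ), ∀ i, γ < c i * ((α - 1) / (2 * α)) :=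
    eventually_all.2 fun i => eventually_lt_nhds (mul_pos (hc i) hα')
  obtain ⟨γ, ⟨hγexp, hγsmall⟩, hγ⟩ :=
    (((hexp.and hsmall).filter_mono nhdsWithin_le_nhds).and
      (self_mem_nhdsWithin : Ioi (0 : ℝ) ∈ 𝓝[>] 0)).exists
  refine ⟨γ, hγ, ?_⟩
  filter_upwards [hdom, eventually_all.2 hcd] with t hdom hcd i
  calc Real.exp (γ * τ) * a i t ≤ (1 + α) / 2 * a i t :=
        mul_le_mul_of_nonneg_right hγexp.le (ha i t)
    _ ≤ (1 + α) / 2 * (d i t * w i / α) :=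
        mul_le_mul_of_nonneg_left ((le_div_iff₀' (by linarith)).2 (hdom i)) (by linarith)
    _ = (d i t - d i t * ((α - 1) / (2 * α))) * w i := by
        field_simp
        ring
    _ < (d i t - γ) * w i := by
        refine mul_lt_mul_of_pos_right (sub_lt_sub_left ?_ _) (hw i)
        exact (hγsmall i).trans_le (mul_le_mul_of_nonneg_right (hcd i) hα'.le)

theorem abs_apply_le_norm_seg {n : ℕ} {τ : ℝ} (x : C(ℝ, Fin n → ℝ)) (j : Fin n) {t₀ s : ℝ}
    (hs : s ∈ Icc (t₀ - τ) t₀) : |x s j| ≤ ‖seg τ x t₀‖ := by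
  have hθ : s - t₀ ∈ Icc (-τ) 0 := ⟨by linarith [hs.1], by linarith [hs.2]⟩
  calc |x s j| ≤ ‖x s‖ := norm_le_pi_norm (x s) j
    _ = ‖seg τ x t₀ ⟨s - t₀, hθ⟩‖ := by simp [seg]
    _ ≤ ‖seg τ x t₀‖ := ContinuousMap.norm_coe_le_norm _ _

theorem norm_seg_proj_le {n : ℕ} {τ : ℝ} (x : C(ℝ, Fin n → ℝ)) (j : Fin n) {t W : ℝ}
    (hW : 0 ≤ W) (h : ∀ s ∈ Icc (t - τ) t, |x s j| ≤ W) : ‖seg τ (proj x j) t‖ ≤ W :=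
  (ContinuousMap.norm_le _ hW).2 fun θ => h (t + θ) ⟨by linarith [θ.2.1], by linarith [θ.2.2]⟩

theorem abs_sum_apply_seg_proj_le {n : ℕ} {τ : ℝ} (ℓ : Fin n → C(Icc (-τ) (0 : ℝ), ℝ) →L[ℝ] ℝ)
    (x : C(ℝ, Fin n → ℝ)) {v : Fin n → ℝ} (hv : ∀ j, 0 ≤ v j) {t W : ℝ} (hW : 0 ≤ W)
    (h : ∀ j, ∀ s ∈ Icc (t - τ) t, |x s j| ≤ v j * W) :
    |∑ j, ℓ j (seg τ (proj x j) t)| ≤ (∑ j, ‖ℓ j‖ * v j) * W := by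
  rw [Finset.sum_mul]
  refine (Finset.abs_sum_le_sum_abs _ _).trans (Finset.sum_le_sum fun j _ => ?_)
  calc |ℓ j (seg τ (proj x j) t)| ≤ ‖ℓ j‖ * ‖seg τ (proj x j) t‖ := (ℓ j).le_opNorm _
    _ ≤ ‖ℓ j‖ * (v j * W) :=
      mul_le_mul_of_nonneg_left (norm_seg_proj_le x j (mul_nonneg (hv j) hW) (h j))
        (norm_nonneg (ℓ j))
    _ = ‖ℓ j‖ * v j * W := by ring

noncomputable def delayField {n : ℕ} {τ : ℝ} (d : Fin n → ℝ → ℝ)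
    (L : Fin n → Fin n → ℝ → (C(Icc (-τ) (0 : ℝ), ℝ) →L[ℝ] ℝ)) (x : C(ℝ, Fin n → ℝ))
    (i : Fin n) (t : ℝ) : ℝ :=
  -(d i t) * x t i + ∑ j, L i j t (seg τ (proj x j) t)

section DelaySystem

variable {n : ℕ} {τ : ℝ} {d : Fin n → ℝ → ℝ}
  {L : Fin n → Fin n → ℝ → (C(Icc (-τ) (0 : ℝ), ℝ) →L[ℝ] ℝ)} {v : Fin n → ℝ}
  {x : C(ℝ, Fin n → ℝ)} {p q ρ κ C m Λ γ t₀ T₁ : ℝ}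

theorem units_mul_delayField_div_lt (hv : ∀ i, 0 < v i) {i : Fin n} {t U : ℝ} (hU : 0 < U)
    (hκ : 0 ≤ κ) (hwin : ∀ j, ∀ s ∈ Icc (t - τ) t, |x s j| ≤ v j * (κ * U))
    (hrate : κ * ∑ j, ‖L i j t‖ * v j < (d i t + ρ) * v i) {ε : ℤˣ}
    (hcontact : ((ε : ℤ) : ℝ) * (x t i / v i) = U) :
    ((ε : ℤ) : ℝ) * (delayField d L x i t / v i) < ρ * U := by
  set S := ∑ j, L i j t (seg τ (proj x j) t)
  have hS : |S| ≤ (∑ j, ‖L i j t‖ * v j) * (κ * U) :=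
    abs_sum_apply_seg_proj_le (L i · t) x (fun j => (hv j).le) (mul_nonneg hκ hU.le) hwin
  have hεS : ((ε : ℤ) : ℝ) * S < (d i t + ρ) * v i * U :=
    calc ((ε : ℤ) : ℝ) * S ≤ |S| := abs_le_iff_forall_units_mul.1 le_rfl ε
      _ ≤ κ * (∑ j, ‖L i j t‖ * v j) * U := by linarith
      _ < (d i t + ρ) * v i * U := mul_lt_mul_of_pos_right hrate hU
  have hvi := (hv i).ne'
  calc ((ε : ℤ) : ℝ) * (delayField d L x i t / v i)
        = -(d i t) * (((ε : ℤ) : ℝ) * (x t i / v i)) + ((ε : ℤ) : ℝ) * S / v i := by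
          simp only [delayField, S]
          field_simp
    _ < -(d i t) * U + (d i t + ρ) * U := by
          rw [hcontact]
          gcongr
          rw [div_lt_iff₀ (hv i)]
          linarith
    _ = ρ * U := by ring

theorem abs_lt_of_exp_barrier (hτ : 0 ≤ τ) (hv : ∀ i, 0 < v i) (hC : 0 < C)
    (hκ : ∀ θ ∈ Icc (-τ) 0, Real.exp (ρ * θ) ≤ κ)
    (hx : ∀ i, ∀ t ∈ Ioc p q, HasDerivAt (fun s => x s i) (delayField d L x i t) t)
    (hrate : ∀ t ∈ Ioc p q, ∀ i, κ * ∑ j, ‖L i j t‖ * v j < (d i t + ρ) * v i)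
    (hinit : ∀ i, ∀ s ∈ Icc (p - τ) p, |x s i| < v i * (C * Real.exp (ρ * (s - p)))) :
    ∀ t ∈ Icc p q, ∀ i, |x t i| < v i * (C * Real.exp (ρ * (t - p))) := by
  set u : ℝ → ℝ := fun s => C * Real.exp (ρ * (s - p))
  have hu : ∀ t, HasDerivAt u (ρ * u t) t := fun t => by
    simpa [u, mul_comm, mul_left_comm] using
      (((hasDerivAt_id t).sub_const p).const_mul ρ).exp.const_mul C
  have hu_pos : ∀ t, 0 < u t := fun t => mul_pos hC (Real.exp_pos _)
  have habs_div : ∀ i s, |x s i / v i| < u s ↔ |x s i| < v i * u s := fun i s => by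
    rw [abs_div, abs_of_pos (hv i), div_lt_iff₀' (hv i)]
  -- `|x_i| < v_i u` is the one-sided barrier for the `2n` functions `±x_i / v_i`.
  have hcross := lt_of_first_crossing hτ (u := u) (p := p) (q := q)
    (z := fun (k : Fin n × ℤˣ) s => ((k.2 : ℤ) : ℝ) * (x s k.1 / v k.1))
    (fun k => continuous_const.mul (((continuous_apply k.1).comp x.continuous).div_const _)) hu
    (fun k s hs => abs_lt_iff_forall_units_mul.1 ((habs_div k.1 s).2 (hinit k.1 s hs)) k.2) ?_
  · exact fun t ht i =>
      (habs_div i t).1 <| abs_lt_iff_forall_units_mul.2 fun ε => hcross t ht (i, ε)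
  rintro t ht ⟨i, ε⟩ hwindow hcontact
  have hwin : ∀ j, ∀ s ∈ Icc (t - τ) t, |x s j| ≤ v j * (κ * u t) := by
    intro j s hs
    have h1 : |x s j / v j| ≤ u s := abs_le_iff_forall_units_mul.2 fun ε' => hwindow (j, ε') s hs
    have h2 : u s ≤ κ * u t :=
      calc u s = Real.exp (ρ * (s - t)) * u t := by
            simp only [u]; rw [mul_left_comm, ← Real.exp_add]; ring_nf
        _ ≤ κ * u t := mul_le_mul_of_nonneg_right
            (hκ _ ⟨by linarith [hs.1], by linarith [hs.2]⟩) (hu_pos t).le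
    rw [abs_div, abs_of_pos (hv j), div_le_iff₀' (hv j)] at h1
    exact h1.trans (mul_le_mul_of_nonneg_left h2 (hv j).le)
  exact ⟨_, ((hx i t ht).div_const (v i)).const_mul _, units_mul_delayField_div_lt hv (hu_pos t)
    ((Real.exp_pos _).trans_le (hκ 0 ⟨by linarith, le_rfl⟩)).le hwin (hrate t ht i) hcontact⟩

theorem abs_le_of_exp_barrier (hτ : 0 ≤ τ) (hv : ∀ i, 0 < v i) (hC : 0 ≤ C)
    (hκ : ∀ θ ∈ Icc (-τ) 0, Real.exp (ρ * θ) ≤ κ)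
    (hx : ∀ i, ∀ t ∈ Ioc p q, HasDerivAt (fun s => x s i) (delayField d L x i t) t)
    (hrate : ∀ t ∈ Ioc p q, ∀ i, κ * ∑ j, ‖L i j t‖ * v j < (d i t + ρ) * v i)
    (hinit : ∀ i, ∀ s ∈ Icc (p - τ) p, |x s i| ≤ v i * (C * Real.exp (ρ * (s - p)))) :
    ∀ t ∈ Icc (p - τ) q, ∀ i, |x t i| ≤ v i * (C * Real.exp (ρ * (t - p))) := by
  intro t ht i
  rcases lt_or_ge t p with htp | hpt
  · exact hinit i t ⟨ht.1, htp.le⟩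
  have hlt : ∀ C' > C, |x t i| < v i * (C' * Real.exp (ρ * (t - p))) := fun C' hC' =>
    abs_lt_of_exp_barrier hτ hv (hC.trans_lt hC') hκ hx hrate
      (fun j s hs => (hinit j s hs).trans_lt <|
        mul_lt_mul_of_pos_left (mul_lt_mul_of_pos_right hC' (Real.exp_pos _)) (hv j))
      t ⟨hpt, ht.2⟩ i
  exact ge_of_tendsto (x := 𝓝[>] C)
    ((Continuous.tendsto (by fun_prop) C).mono_left nhdsWithin_le_nhds)
    (eventually_nhdsWithin_of_forall fun C' hC' => (hlt C' hC').le)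

theorem abs_le_growth_phase (hτ : 0 ≤ τ) (hv : ∀ i, 0 < v i) (hm : 0 < m)
    (hmv : ∀ i, m ≤ v i) (hΛ : 0 ≤ Λ)
    (hx : ∀ i, ∀ t ∈ Ioc t₀ q, HasDerivAt (fun s => x s i) (delayField d L x i t) t)
    (hrate : ∀ t ∈ Ioc t₀ q, ∀ i, ∑ j, ‖L i j t‖ * v j < (d i t + Λ) * v i) :
    ∀ s ∈ Icc (t₀ - τ) q, ∀ i,
      |x s i| ≤ v i * (‖seg τ x t₀‖ / m * Real.exp (Λ * τ) * Real.exp (Λ * (s - t₀))) := by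
  refine abs_le_of_exp_barrier hτ hv
    (mul_nonneg (div_nonneg (norm_nonneg _) hm.le) (Real.exp_pos _).le) (κ := 1)
    (fun θ hθ => Real.exp_le_one_iff.2 (mul_nonpos_of_nonneg_of_nonpos hΛ hθ.2)) hx
    (fun t ht i => (one_mul _).trans_lt (hrate t ht i)) fun i s hs => ?_
  have hN : ‖seg τ x t₀‖ ≤ v i * (‖seg τ x t₀‖ / m) := by
    rw [mul_div_assoc', le_div_iff₀ hm, mul_comm (v i)]
    exact mul_le_mul_of_nonneg_left (hmv i) (norm_nonneg (seg τ x t₀))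
  calc |x s i| ≤ ‖seg τ x t₀‖ := abs_apply_le_norm_seg x i hs
    _ ≤ v i * (‖seg τ x t₀‖ / m) := hN
    _ ≤ v i * (‖seg τ x t₀‖ / m) * Real.exp (Λ * (τ + (s - t₀))) :=
      le_mul_of_one_le_right ((norm_nonneg _).trans hN)
        (Real.one_le_exp (mul_nonneg hΛ (by linarith [hs.1])))
    _ = _ := by rw [mul_add, Real.exp_add]; ring

theorem abs_le_decay_phase (hτ : 0 ≤ τ) (hv : ∀ i, 0 < v i) (hC : 0 ≤ C) (hγ : 0 ≤ γ)
    (hx : ∀ i, ∀ t ∈ Ioc p q, HasDerivAt (fun s => x s i) (delayField d L x i t) t)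
    (hrate : ∀ t ∈ Ioc p q, ∀ i, Real.exp (γ * τ) * ∑ j, ‖L i j t‖ * v j < (d i t - γ) * v i)
    (hinit : ∀ i, ∀ s ∈ Icc (p - τ) p, |x s i| ≤ v i * C) :
    ∀ s ∈ Icc (p - τ) q, ∀ i, |x s i| ≤ v i * (C * Real.exp (-γ * (s - p))) := by
  refine abs_le_of_exp_barrier hτ hv hC (κ := Real.exp (γ * τ))
    (fun θ hθ => Real.exp_le_exp.2 (by nlinarith [hθ.1])) hx
    (fun t ht i => by rw [← sub_eq_add_neg]; exact hrate t ht i) fun i s hs => ?_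
  refine (hinit i s hs).trans (mul_le_mul_of_nonneg_left ?_ (hv i).le)
  exact le_mul_of_one_le_right hC (Real.one_le_exp (by nlinarith [hs.2]))

/-- The growth phase `[t₀, max t₀ T₁]` lasts at most `T₁`; hence the factor `exp ((Λ + γ) T₁)`. -/
theorem abs_le_of_growth_decay (hτ : 0 ≤ τ) (hv : ∀ i, 0 < v i) (hm : 0 < m)
    (hmv : ∀ i, m ≤ v i) (hΛ : 0 ≤ Λ) (hγ : 0 ≤ γ) (hT₁ : 0 ≤ T₁) (ht₀ : 0 ≤ t₀)
    (hgrowth : ∀ t ∈ Icc 0 T₁, ∀ i, ∑ j, ‖L i j t‖ * v j < (d i t + Λ) * v i)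
    (hdecay : ∀ t ≥ T₁, ∀ i,
      Real.exp (γ * τ) * ∑ j, ‖L i j t‖ * v j < (d i t - γ) * v i)
    (hx : ∀ i, ∀ t > t₀, HasDerivAt (fun s => x s i) (delayField d L x i t) t) :
    ∀ t ≥ t₀, ∀ i, |x t i| ≤
      v i * (‖seg τ x t₀‖ / m * Real.exp (Λ * τ + (Λ + γ) * T₁ - γ * (t - t₀))) := by
  intro t ht i
  set P := max t₀ T₁
  have hP : P ≤ t₀ + T₁ := max_le (by linarith) (by linarith)
  set C := ‖seg τ x t₀‖ / m
  have hmono : ∀ {a b : ℝ}, a ≤ b → v i * (C * Real.exp a) ≤ v i * (C * Real.exp b) :=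
    fun hab => mul_le_mul_of_nonneg_left (mul_le_mul_of_nonneg_left (Real.exp_le_exp.2 hab)
      (by positivity)) (hv i).le
  have hgrowth' := abs_le_growth_phase hτ hv hm hmv hΛ (q := P) (fun j s hs => hx j s hs.1)
    fun s hs => hgrowth s ⟨ht₀.trans hs.1.le, (le_max_iff.1 hs.2).resolve_left hs.1.not_ge⟩
  rcases le_total t P with htP | hPt
  · refine (hgrowth' t ⟨by linarith, htP⟩ i).trans ?_
    rw [mul_assoc, ← Real.exp_add, ← mul_add]
    exact hmono (by nlinarith)
  have hdecay' := abs_le_decay_phase hτ hv (by positivity) hγ (p := P) (q := t)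
    (C := C * Real.exp (Λ * τ) * Real.exp (Λ * (P - t₀)))
    (fun j s hs => hx j s ((le_max_left _ _).trans_lt hs.1))
    (fun s hs => hdecay s ((le_max_right _ _).trans hs.1.le)) fun j s hs =>
      (hgrowth' s ⟨by linarith [hs.1, le_max_left t₀ T₁], hs.2⟩ j).trans <|
        mul_le_mul_of_nonneg_left (mul_le_mul_of_nonneg_left (Real.exp_le_exp.2 <| by
          nlinarith [hs.2]) (by positivity)) (hv j).le
  refine (hdecay' t ⟨by linarith, le_rfl⟩ i).trans ?_
  rw [mul_assoc C, mul_assoc C, ← Real.exp_add, ← Real.exp_add]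
  exact hmono (by nlinarith)

end DelaySystem

theorem linear_exp_stable_H2star_general
    (n : ℕ) (τ : ℝ) (hτ : 0 ≤ τ)
    (d : Fin n → ℝ → ℝ)
    (L : Fin n → Fin n → ℝ → (C(Set.Icc (-τ) (0 : ℝ), ℝ) →L[ℝ] ℝ))
    -- (H1): continuity of the data
    (hd_pos : ∀ i, ∀ t ≥ (0 : ℝ), 0 < d i t)
    (hL_cont : ∀ i j, ContinuousOn (L i j) (Set.Ici (0 : ℝ)))
    -- (H2*): ∃ v > 0, α > 1 with D(t) v ≥ α A(t) v componentwise for t ≥ T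
    (v : Fin n → ℝ) (hv : ∀ i, 0 < v i) (α : ℝ) (hα : 1 < α) (T : ℝ)
    (hH2star : ∀ t ≥ T, ∀ i, α * ∑ j, ‖L i j t‖ * v j ≤ d i t * v i)
    -- liminf_{t→∞} d_i(t) > 0 for every i
    (hd_liminf : ∀ i, ∃ c > 0, ∀ᶠ t in Filter.atTop, c ≤ d i t) :
    ∃ k > 0, ∃ γ > 0, ∀ t₀ ≥ (0 : ℝ), ∀ x : C(ℝ, Fin n → ℝ),
      (∀ i, ∀ t > t₀, HasDerivAt (fun s => x s i)
          (-(d i t) * x t i + ∑ j, L i j t (seg τ (proj x j) t)) t) →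
      ∀ t ≥ t₀, ‖x t‖ ≤ k * Real.exp (-γ * (t - t₀)) * ‖seg τ x t₀‖ := by
  obtain ⟨γ, hγ, hdecay⟩ := exists_decay_rate τ hα hv (a := fun i t => ∑ j, ‖L i j t‖ * v j)
    (fun i t => Finset.sum_nonneg fun j _ => mul_nonneg (norm_nonneg (L i j t)) (hv j).le)
    (eventually_atTop.2 ⟨T, hH2star⟩) hd_liminf
  obtain ⟨T₁, hT₁⟩ := eventually_atTop.1 (hdecay.and (eventually_ge_atTop 0))
  obtain ⟨Λ, hΛ, hgrowth⟩ := exists_pos_forall_lt_mul_of_isCompact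
    (isCompact_Icc (a := 0) (b := T₁)) (f := fun i t => ∑ j, ‖L i j t‖ * v j)
    (fun i => continuousOn_finsetSum _ fun j _ => ContinuousOn.mul_const
      (ContinuousOn.norm (E := C(Icc (-τ) (0 : ℝ), ℝ) →L[ℝ] ℝ)
        ((hL_cont i j).mono Icc_subset_Ici_self)) (v j)) hv
  obtain ⟨m, hmv, hm⟩ := ((eventually_all.2 fun i =>
    (eventually_le_nhds (hv i)).filter_mono nhdsWithin_le_nhds).and
    (self_mem_nhdsWithin : Ioi (0 : ℝ) ∈ 𝓝[>] 0)).exists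
  obtain ⟨V, hvV, hV⟩ := ((eventually_all.2 fun i => eventually_ge_atTop (v i)).and
    (eventually_gt_atTop (0 : ℝ))).exists
  refine ⟨V / m * Real.exp (Λ * τ + (Λ + γ) * T₁), by positivity, γ, hγ,
    fun t₀ ht₀ x hx t ht => ?_⟩
  have hbound := abs_le_of_growth_decay hτ hv hm hmv hΛ.le hγ.le (hT₁ T₁ le_rfl).2 ht₀
    (fun s hs i => (hgrowth s hs i).trans (by nlinarith [hd_pos i s hs.1, hv i]))
    (fun s hs => (hT₁ s hs).1) hx t ht
  have hC : 0 ≤ ‖seg τ x t₀‖ / m * Real.exp (Λ * τ + (Λ + γ) * T₁ - γ * (t - t₀)) := by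
    positivity
  calc ‖x t‖ ≤ V * (‖seg τ x t₀‖ / m * Real.exp (Λ * τ + (Λ + γ) * T₁ - γ * (t - t₀))) :=
        (pi_norm_le_iff_of_nonneg (by positivity)).2 fun i =>
          (hbound i).trans (mul_le_mul_of_nonneg_right (hvV i) hC)
    _ = V / m * Real.exp (Λ * τ + (Λ + γ) * T₁) * Real.exp (-γ * (t - t₀)) * ‖seg τ x t₀‖ := by
        rw [sub_eq_add_neg, Real.exp_add, neg_mul]
        ring

/-- Under (H1) and (H2*), if `liminf_{t→∞} d_i(t) > 0` for every `i`, the linear delay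
system `x_i'(t) = -d_i(t) x_i(t) + ∑_j L_ij(t) (x_j)_t` is exponentially asymptotically
stable. -/
theorem linear_exp_stable_H2star
    (n : ℕ) (hn : 1 ≤ n) (τ : ℝ) (hτ : 0 ≤ τ)
    (d : Fin n → ℝ → ℝ)
    (L : Fin n → Fin n → ℝ → (C(Set.Icc (-τ) (0 : ℝ), ℝ) →L[ℝ] ℝ))
    -- (H1): continuity of the data
    (hd_pos : ∀ i, ∀ t ≥ (0 : ℝ), 0 < d i t)
    (hd_cont : ∀ i, ContinuousOn (d i) (Set.Ici 0))
    (hL_cont : ∀ i j, ContinuousOn (L i j) (Set.Ici (0 : ℝ)))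
    -- (H2*): ∃ v > 0, α > 1 with D(t) v ≥ α A(t) v componentwise for t ≥ T
    (v : Fin n → ℝ) (hv : ∀ i, 0 < v i) (α : ℝ) (hα : 1 < α) (T : ℝ) (hT : 0 ≤ T)
    (hH2star : ∀ t ≥ T, ∀ i, α * ∑ j, ‖L i j t‖ * v j ≤ d i t * v i)
    -- liminf_{t→∞} d_i(t) > 0 for every i
    (hd_liminf : ∀ i, ∃ c > 0, ∀ᶠ t in Filter.atTop, c ≤ d i t) :
    ∃ k > 0, ∃ γ > 0, ∀ t₀ ≥ (0 : ℝ), ∀ x : C(ℝ, Fin n → ℝ),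
      (∀ i, ∀ t > t₀, HasDerivAt (fun s => x s i)
          (-(d i t) * x t i + ∑ j, L i j t (seg τ (proj x j) t)) t) →
      ∀ t ≥ t₀, ‖x t‖ ≤ k * Real.exp (-γ * (t - t₀)) * ‖seg τ x t₀‖ :=
  linear_exp_stable_H2star_general n τ hτ d L hd_pos hL_cont v hv α hα T hH2star hd_liminf
end

section
/- Consider the linear ODE system x_i'(t) = −d_i(t)x_i(t) + Σ_{j≠i} d_ij(t)x_j(t), i = 1,…,n, t > 0, where d_i : [0,∞) → (0,∞) and d_ij : [0,∞) → ℝ (j ≠ i) are continuous. Set a_ij(t) := |d_ij(t)| for j ≠ i and a_ii(t) := 0, D(t) := diag(d_1(t),…,d_n(t)), A(t) := [a_ij(t)]. If there exist a componentwise positive vector v ∈ ℝⁿ, δ > 0 and T ≥ 0 such that (D(t) − A(t) − δI)v ≥ 0 componentwise for all t ≥ T (hypothesis (H2)), then the system is exponentially asymptotically stable: there exist k > 0 and γ > 0 such that for every t₀ ≥ 0, every solution x : [t₀,∞) → ℝⁿ of the system satisfies |x(t)| ≤ k·e^{−γ(t−t₀)}·|x(t₀)| for all t ≥ t₀. No boundedness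 of the coefficients d_ij(t) is required. -/
/-!
Let `y = v⁻¹ * x`, i.e. `y_i = x_i / v_i`, and `m = ‖y‖ = max_i |y_i|`. At a coordinate `j`
attaining the maximum, `|y_j|' ≤ (S_j - d_j) m` with `S_j = (A v)_j / v_j`, and the other
coordinates do not affect the right Dini derivative of `m`; hence `m` obeys a Grönwall bound
with rate `max_j (S_j - d_j)`. After `T` this rate is `≤ -δ` by (H2); on `[0, T]` it is at most
a bound `C` of the continuous `S` on the compact interval, as `d > 0`. Chaining the two phases
gives `m t ≤ exp ((C + δ) T) exp (-δ (t - t₀)) m t₀`, and passing between `x` and `y` costs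
the factor `‖v‖ ‖v⁻¹‖`.
-/

open Set Filter Topology

theorem HasDerivAt.abs_sign_mul {f : ℝ → ℝ} {f' u : ℝ} (hf : HasDerivAt f f' u)
    (h : f u = 0 → f' = 0) : HasDerivAt (fun z => |f z|) (SignType.sign (f u) * f') u := by
  by_cases hu : f u = 0
  · rw [h hu, hasDerivAt_iff_isLittleO] at hf
    rw [h hu, mul_zero, hasDerivAt_iff_isLittleO]
    refine (Asymptotics.isBigO_of_le _ fun z => ?_).trans_isLittleO hf
    simp [hu]
  · exact (hasDerivAt_abs hu).comp u hf

theorem eventually_slope_pi_norm_lt {ι E : Type*} [Fintype ι] [Nonempty ι] [SeminormedAddGroup E]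
    {y : ℝ → ι → E} {u r : ℝ} (hy : ContinuousWithinAt y (Ioi u) u)
    (hmax : ∀ j, ‖y u j‖ = ‖y u‖ → ∀ᶠ z in 𝓝[>] u, slope (fun z => ‖y z j‖) u z < r) :
    ∀ᶠ z in 𝓝[>] u, slope (fun z => ‖y z‖) u z < r := by
  have hcoord : ∀ j, ∀ᶠ z in 𝓝[>] u, ‖y z j‖ - ‖y u‖ < r * (z - u) := by
    intro j
    rcases (norm_le_pi_norm (y u) j).eq_or_lt with hj | hj
    · filter_upwards [hmax j hj, self_mem_nhdsWithin] with z hz (hzu : u < z)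
      rwa [slope_def_field, hj, div_lt_iff₀ (sub_pos.2 hzu)] at hz
    · have hlim : Tendsto (fun z => ‖y z j‖ - ‖y u‖ - r * (z - u)) (𝓝[>] u)
          (𝓝 (‖y u j‖ - ‖y u‖ - r * (u - u))) :=
        (((continuous_apply j).continuousAt.comp_continuousWithinAt hy).norm.sub
          continuousWithinAt_const).sub
          ((continuous_const.mul (continuous_id.sub continuous_const)).continuousWithinAt)
      filter_upwards [hlim.eventually_lt_const (show _ < (0 : ℝ) by simpa using hj)] with z hz
      linarith
  filter_upwards [eventually_all.2 hcoord, self_mem_nhdsWithin] with z hz (hzu : u < z)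
  obtain ⟨j, hj⟩ := (IsGreatest.pi_norm (y z)).1
  rw [slope_def_field, div_lt_iff₀ (sub_pos.2 hzu), ← hj]
  simpa only using hz j

theorem pi_norm_le_mul_exp_of_coord_deriv_le {ι E : Type*} [Fintype ι] [Nonempty ι]
    [SeminormedAddGroup E] {y : ℝ → ι → E} {a b K : ℝ} (hab : a ≤ b)
    (hy : ContinuousOn y (Icc a b))
    (hrate : ∀ u ∈ Ioo a b, ∀ j, ‖y u j‖ = ‖y u‖ →
      ∃ L ≤ K * ‖y u‖, HasDerivAt (fun z => ‖y z j‖) L u) :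
    ‖y b‖ ≤ ‖y a‖ * Real.exp (K * (b - a)) := by
  -- Grönwall needs the Dini bound at its left endpoint, where no derivative is assumed:
  -- apply it on `[s, b]` and let `s → a⁺`.
  have hinterior : ∀ s ∈ Ioc a b, ‖y b‖ ≤ ‖y s‖ * Real.exp (K * (b - s)) := by
    intro s hs
    have hslope : ∀ u ∈ Ico s b, ∀ r, K * ‖y u‖ < r →
        ∃ᶠ z in 𝓝[>] u, (z - u)⁻¹ * (‖y z‖ - ‖y u‖) < r := by
      intro u hu r hr
      have hu' : u ∈ Ioo a b := ⟨hs.1.trans_le hu.1, hu.2⟩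
      refine Eventually.frequently ?_
      simpa only [slope_def_field, div_eq_inv_mul] using eventually_slope_pi_norm_lt
        ((hy.continuousAt (Icc_mem_nhds hu'.1 hu'.2)).continuousWithinAt) fun j hj => by
          obtain ⟨L, hLK, hL⟩ := hrate u hu' j hj
          exact ((hasDerivAt_iff_tendsto_slope.1 hL).mono_left
            (nhdsWithin_mono _ fun z hz => ne_of_gt hz)).eventually_lt_const (hLK.trans_lt hr)
    have := le_gronwallBound_of_liminf_deriv_right_le
      (hy.mono (Icc_subset_Icc_left hs.1.le)).norm hslope le_rfl
      (fun _ _ => (add_zero _).ge) b ⟨hs.2, le_rfl⟩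
    rwa [gronwallBound_ε0] at this
  rcases hab.eq_or_lt with rfl | hab
  · simp
  have hlim : Tendsto (fun s => ‖y s‖ * Real.exp (K * (b - s))) (𝓝[>] a)
      (𝓝 (‖y a‖ * Real.exp (K * (b - a)))) :=
    ((hy a (left_mem_Icc.2 hab.le)).mono_of_mem_nhdsWithin (Icc_mem_nhdsGT hab)).norm.mul
      (by fun_prop : Continuous fun s => Real.exp (K * (b - s))).continuousWithinAt
  exact ge_of_tendsto hlim (eventually_of_mem (Ioc_mem_nhdsGT hab) hinterior)

theorem le_exp_mul_exp_of_growth_then_decay {m : ℝ → ℝ} {t₀ T L δ : ℝ} (ht₀ : 0 ≤ t₀)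
    (hT : 0 ≤ T) (hLδ : 0 ≤ L + δ) (hm : 0 ≤ m t₀)
    (growth : ∀ a b, t₀ ≤ a → a ≤ b → b ≤ T → m b ≤ m a * Real.exp (L * (b - a)))
    (decay : ∀ a b, t₀ ≤ a → T ≤ a → a ≤ b → m b ≤ m a * Real.exp (-δ * (b - a)))
    {t : ℝ} (ht : t₀ ≤ t) :
    m t ≤ Real.exp ((L + δ) * T) * Real.exp (-δ * (t - t₀)) * m t₀ := by
  rw [← Real.exp_add, mul_comm]
  rcases le_or_gt t T with htT | hTt
  · refine (growth t₀ t le_rfl ht htT).trans (mul_le_mul_of_nonneg_left ?_ hm)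
    exact Real.exp_le_exp.2 (by nlinarith)
  rcases le_or_gt t₀ T with ht₀T | hTt₀
  · calc m t ≤ m T * Real.exp (-δ * (t - T)) := decay T t ht₀T le_rfl hTt.le
      _ ≤ m t₀ * Real.exp (L * (T - t₀)) * Real.exp (-δ * (t - T)) :=
          mul_le_mul_of_nonneg_right (growth t₀ T le_rfl ht₀T le_rfl) (Real.exp_pos _).le
      _ = m t₀ * Real.exp (L * (T - t₀) + -δ * (t - T)) := by rw [Real.exp_add]; ring
      _ ≤ m t₀ * Real.exp ((L + δ) * T + -δ * (t - t₀)) :=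
          mul_le_mul_of_nonneg_left (Real.exp_le_exp.2 (by nlinarith)) hm
  · refine (decay t₀ t le_rfl hTt₀.le ht).trans (mul_le_mul_of_nonneg_left ?_ hm)
    exact Real.exp_le_exp.2 (by nlinarith [mul_nonneg hLδ hT])

/-- `offDiagWeight doff v j t = (A(t) v)_j / v_j`. -/
noncomputable def offDiagWeight {n : ℕ} (doff : Fin n → Fin n → ℝ → ℝ) (v : Fin n → ℝ)
    (j : Fin n) (t : ℝ) : ℝ :=
  (∑ k ∈ Finset.univ.erase j, |doff j k t| * v k) / v j

theorem continuousOn_offDiagWeight {n : ℕ} {doff : Fin n → Fin n → ℝ → ℝ} (v : Fin n → ℝ)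
    {s : Set ℝ} (hdoff : ∀ i j, i ≠ j → ContinuousOn (doff i j) s) :
    ContinuousOn (fun t j => offDiagWeight doff v j t) s :=
  continuousOn_pi.2 fun j => (continuousOn_finsetSum _ fun k hk =>
    (hdoff j k (Finset.ne_of_mem_erase hk).symm).abs.mul continuousOn_const).div_const _

section LinearSystem

variable {n : ℕ} {d : Fin n → ℝ → ℝ} {doff : Fin n → Fin n → ℝ → ℝ} {v : Fin n → ℝ}

theorem offDiagWeight_sub_le_neg_iff {j : Fin n} {t c δ : ℝ} (hvj : 0 < v j) :
    offDiagWeight doff v j t - c ≤ -δ ↔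
      δ * v j ≤ c * v j - ∑ k ∈ Finset.univ.erase j, |doff j k t| * v k := by
  rw [offDiagWeight, sub_le_iff_le_add, div_le_iff₀ hvj]
  constructor <;> intro h <;> linarith

theorem exists_hasDerivAt_norm_weighted_le {x : ℝ → Fin n → ℝ} {u : ℝ} {j : Fin n}
    (hv : ∀ i, 0 < v i)
    (hx : HasDerivAt (fun s => x s j)
      (-(d j u) * x u j + ∑ k ∈ Finset.univ.erase j, doff j k u * x u k) u)
    (hj : ‖(v⁻¹ * x u) j‖ = ‖v⁻¹ * x u‖) :
    ∃ L ≤ (offDiagWeight doff v j u - d j u) * ‖v⁻¹ * x u‖,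
      HasDerivAt (fun z => ‖(v⁻¹ * x z) j‖) L u := by
  set y := v⁻¹ * x u
  set F := -(d j u) * x u j + ∑ k ∈ Finset.univ.erase j, doff j k u * x u k
  have hxy : ∀ k, x u k = v k * y k := fun k => by
    simp [y, mul_inv_cancel_left₀ (hv k).ne']
  have hy_le : ∀ k, |y k| ≤ ‖y‖ := fun k => by simpa using norm_le_pi_norm y k
  have hderiv : HasDerivAt (fun z => (v⁻¹ * x z) j) ((v j)⁻¹ * F) u := hx.const_mul _
  have hF : y j = 0 → (v j)⁻¹ * F = 0 := by
    intro hyj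
    have hy0 : ∀ k, y k = 0 := fun k => abs_nonpos_iff.1 <| (hy_le k).trans <| by
      rw [← hj, Real.norm_eq_abs]; exact (abs_eq_zero.2 hyj).le
    simp [F, hxy, hy0]
  set s : ℝ := (SignType.sign (y j) : ℝ)
  have hs : |s| ≤ 1 := by
    rcases lt_trichotomy (y j) 0 with h | h | h <;> simp [s, h]
  have hsy : s * y j = ‖y‖ := by rw [sign_mul_self, ← Real.norm_eq_abs, hj]
  have hoff : s * ∑ k ∈ Finset.univ.erase j, doff j k u * x u k
      ≤ (∑ k ∈ Finset.univ.erase j, |doff j k u| * v k) * ‖y‖ := by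
    rw [Finset.mul_sum, Finset.sum_mul]
    refine Finset.sum_le_sum fun k _ => ?_
    have hxk : |x u k| ≤ v k * ‖y‖ := by
      rw [hxy k, abs_mul, abs_of_pos (hv k)]
      exact mul_le_mul_of_nonneg_left (hy_le k) (hv k).le
    calc s * (doff j k u * x u k) ≤ |s| * (|doff j k u| * |x u k|) := by
          rw [← abs_mul, ← abs_mul]; exact le_abs_self _
      _ ≤ 1 * (|doff j k u| * (v k * ‖y‖)) := by gcongr
      _ = |doff j k u| * v k * ‖y‖ := by ring
  refine ⟨s * ((v j)⁻¹ * F), ?_, by simpa only [Real.norm_eq_abs] using hderiv.abs_sign_mul hF⟩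
  calc s * ((v j)⁻¹ * F)
      = (v j)⁻¹ * (-(d j u) * v j * (s * y j)
          + s * ∑ k ∈ Finset.univ.erase j, doff j k u * x u k) := by
        simp only [F]; rw [hxy j]; ring
    _ ≤ (v j)⁻¹ * (-(d j u) * v j * ‖y‖
          + (∑ k ∈ Finset.univ.erase j, |doff j k u| * v k) * ‖y‖) := by
        rw [hsy]
        exact mul_le_mul_of_nonneg_left (add_le_add_right hoff _) (inv_pos.2 (hv j)).le
    _ = (offDiagWeight doff v j u - d j u) * ‖y‖ := by
        rw [offDiagWeight]; field_simp [(hv j).ne']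
        ring

theorem norm_inv_mul_le_mul_exp_of_rate_le [Nonempty (Fin n)] {x : ℝ → Fin n → ℝ} {t₀ a b K : ℝ}
    (hv : ∀ i, 0 < v i) (hx : ContinuousOn x (Ici t₀))
    (hode : ∀ i, ∀ t > t₀, HasDerivAt (fun s => x s i)
      (-(d i t) * x t i + ∑ j ∈ Finset.univ.erase i, doff i j t * x t j) t)
    (ha : t₀ ≤ a) (hab : a ≤ b)
    (hK : ∀ u ∈ Ioo a b, ∀ j, offDiagWeight doff v j u - d j u ≤ K) :
    ‖v⁻¹ * x b‖ ≤ ‖v⁻¹ * x a‖ * Real.exp (K * (b - a)) :=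
  pi_norm_le_mul_exp_of_coord_deriv_le (y := fun t => v⁻¹ * x t) hab
    (continuousOn_const.mul (hx.mono fun _ hz => ha.trans hz.1)) fun u hu j hj => by
      obtain ⟨L, hL, hderiv⟩ :=
        exists_hasDerivAt_norm_weighted_le hv (hode j u (ha.trans_lt hu.1)) hj
      exact ⟨L, hL.trans (mul_le_mul_of_nonneg_right (hK u hu j) (norm_nonneg _)), hderiv⟩

end LinearSystem

theorem linear_ODE_exp_stable_H2_general
    (n : ℕ) (hn : 1 ≤ n)
    (d : Fin n → ℝ → ℝ) (doff : Fin n → Fin n → ℝ → ℝ)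
    (hd_pos : ∀ i, ∀ t ≥ (0 : ℝ), 0 < d i t)
    (hdoff_cont : ∀ i j, i ≠ j → ContinuousOn (doff i j) (Set.Ici 0))
    -- (H2) with a_ii = 0, a_ij(t) = |d_ij(t)| for j ≠ i
    (v : Fin n → ℝ) (hv : ∀ i, 0 < v i) (δ : ℝ) (hδ : 0 < δ) (T : ℝ) (hT : 0 ≤ T)
    (hH2 : ∀ t ≥ T, ∀ i,
      δ * v i ≤ d i t * v i - ∑ j ∈ Finset.univ.erase i, |doff i j t| * v j) :
    ∃ k > 0, ∃ γ > 0, ∀ t₀ ≥ (0 : ℝ), ∀ x : ℝ → Fin n → ℝ,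
      ContinuousOn x (Set.Ici t₀) →
      (∀ i, ∀ t > t₀, HasDerivAt (fun s => x s i)
          (-(d i t) * x t i + ∑ j ∈ Finset.univ.erase i, doff i j t * x t j) t) →
      ∀ t ≥ t₀, ‖x t‖ ≤ k * Real.exp (-γ * (t - t₀)) * ‖x t₀‖ := by
  let i₀ : Fin n := ⟨0, hn⟩
  have : Nonempty (Fin n) := ⟨i₀⟩
  obtain ⟨C, hC⟩ := isCompact_Icc.exists_bound_of_continuousOn
    (continuousOn_offDiagWeight v fun i j hij => (hdoff_cont i j hij).mono Icc_subset_Ici_self)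
  have hC0 : 0 ≤ C := (norm_nonneg _).trans (hC 0 ⟨le_rfl, hT⟩)
  have hrate_early : ∀ u ∈ Icc 0 T, ∀ j, offDiagWeight doff v j u - d j u ≤ C := fun u hu j =>
    (sub_le_self _ (hd_pos j u hu.1).le).trans
      ((Real.le_norm_self _).trans ((norm_le_pi_norm _ j).trans (hC u hu)))
  have hrate_late : ∀ u ≥ T, ∀ j, offDiagWeight doff v j u - d j u ≤ -δ := fun u hu j =>
    (offDiagWeight_sub_le_neg_iff (hv j)).2 (hH2 u hu j)
  have hv_norm : 0 < ‖v‖ := norm_pos_iff.2 fun h => (hv i₀).ne' (congrFun h i₀)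
  have hv_inv_norm : 0 < ‖v⁻¹‖ := norm_pos_iff.2 fun h => (inv_pos.2 (hv i₀)).ne' (congrFun h i₀)
  refine ⟨‖v‖ * ‖v⁻¹‖ * Real.exp ((C + δ) * T), by positivity, δ, hδ, ?_⟩
  intro t₀ ht₀ x hx hode t ht
  have hbound := le_exp_mul_exp_of_growth_then_decay (m := fun t => ‖v⁻¹ * x t‖) ht₀ hT
    (by linarith) (norm_nonneg _)
    (fun a b ha hab hbT => norm_inv_mul_le_mul_exp_of_rate_le hv hx hode ha hab
      fun u hu => hrate_early u ⟨ht₀.trans (ha.trans hu.1.le), hu.2.le.trans hbT⟩)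
    (fun a b ha hTa hab => norm_inv_mul_le_mul_exp_of_rate_le hv hx hode ha hab
      fun u hu => hrate_late u (hTa.trans hu.1.le)) ht
  have hx_eq : x t = v * (v⁻¹ * x t) := by
    ext i; simp [mul_inv_cancel_left₀ (hv i).ne']
  calc ‖x t‖ = ‖v * (v⁻¹ * x t)‖ := congrArg norm hx_eq
    _ ≤ ‖v‖ * ‖v⁻¹ * x t‖ := norm_mul_le _ _
    _ ≤ ‖v‖ * (Real.exp ((C + δ) * T) * Real.exp (-δ * (t - t₀)) * (‖v⁻¹‖ * ‖x t₀‖)) := by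
        gcongr
        exact hbound.trans (by gcongr; exact norm_mul_le _ _)
    _ = _ := by ring

/-- The linear ODE system `x_i'(t) = -d_i(t) x_i(t) + ∑_{j≠i} d_ij(t) x_j(t)` is
exponentially asymptotically stable under (H2) with `a_ij(t) = |d_ij(t)|` (`j ≠ i`),
with no boundedness assumption on the coefficients. Here `‖·‖` on `Fin n → ℝ`
is the maximum norm. -/
theorem linear_ODE_exp_stable_H2
    (n : ℕ) (hn : 1 ≤ n)
    (d : Fin n → ℝ → ℝ) (doff : Fin n → Fin n → ℝ → ℝ)
    (hd_pos : ∀ i, ∀ t ≥ (0 : ℝ), 0 < d i t)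
    (hd_cont : ∀ i, ContinuousOn (d i) (Set.Ici 0))
    (hdoff_cont : ∀ i j, i ≠ j → ContinuousOn (doff i j) (Set.Ici 0))
    -- (H2) with a_ii = 0, a_ij(t) = |d_ij(t)| for j ≠ i
    (v : Fin n → ℝ) (hv : ∀ i, 0 < v i) (δ : ℝ) (hδ : 0 < δ) (T : ℝ) (hT : 0 ≤ T)
    (hH2 : ∀ t ≥ T, ∀ i,
      δ * v i ≤ d i t * v i - ∑ j ∈ Finset.univ.erase i, |doff i j t| * v j) :
    ∃ k > 0, ∃ γ > 0, ∀ t₀ ≥ (0 : ℝ), ∀ x : ℝ → Fin n → ℝ,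
      ContinuousOn x (Set.Ici t₀) →
      (∀ i, ∀ t > t₀, HasDerivAt (fun s => x s i)
          (-(d i t) * x t i + ∑ j ∈ Finset.univ.erase i, doff i j t * x t j) t) →
      ∀ t ≥ t₀, ‖x t‖ ≤ k * Real.exp (-γ * (t - t₀)) * ‖x t₀‖ :=
  linear_ODE_exp_stable_H2_general n hn d doff hd_pos hdoff_cont v hv δ hδ T hT hH2
end

section
/- Let L(t) : C → ℝⁿ, t ≥ 0, be bounded linear operators depending continuously on t in operator norm, and assume the linear delay system y'(t) = L(t)y_t is exponentially asymptotically stable: there exist k > 0 and γ > 0 such that for every t₀ ≥ 0, every solution y of y'(t) = L(t)y_t on [t₀−τ,∞) satisfies |y(t)| ≤ k·e^{−γ(t−t₀)}·‖y_{t₀}‖ for all t ≥ t₀. Let S ⊆ C and let f : [0,∞) × S → ℝⁿ be continuous and bounded, i.e. there is K ≥ 0 with |f(t,φ)| ≤ K for all (t,φ) ∈ [0,∞) × S. Then there exists M > 0 such that every solution x : [−τ,∞) → ℝⁿ of the perturbed system x'(t) = L(t)x_t + f(t,x_t) whose segments satisfy x_t ∈ S for all t ≥ 0 satisfies limsup_{t→∞}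 |x(t)| ≤ M. -/
/-!
Fix `t > 0` and cut `[0, t]` into `N` steps of length `δ`, short compared with
`1 / sup_{[0,t]} ‖L‖` and `1 / γ`. Let `cᵢ` be the solution of the linear system that agrees with
`x` up to the node `t - i δ`. Over one step the forcing `f` moves `x` at most `2 K δ` away from
`cᵢ₊₁`, so by stability `cᵢ t` and `cᵢ₊₁ t` differ by at most `2 k K δ e^{-γ i δ}`. Summing this
geometric series (a discrete variation of constants) gives
`‖x t‖ ≤ k e^{-γ t} ‖x₀‖ + 4 k K / γ`. The linear solutions `cᵢ` exist by Banach's fixed point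
theorem with a Bielecki weight.
-/

open scoped Topology

open Set Filter Real MeasureTheory BoundedContinuousFunction

section Segment

variable {τ : ℝ} {E : Type*}

lemma continuous_seg [TopologicalSpace E] (y : C(ℝ, E)) : Continuous (seg τ y) :=
  (y.comp ⟨fun p : ℝ × Icc (-τ) (0 : ℝ) => p.1 + p.2, by fun_prop⟩).curry.continuous

lemma seg_sub [TopologicalSpace E] [AddGroup E] [IsTopologicalAddGroup E] (x y : C(ℝ, E))
    (t : ℝ) : seg τ (x - y) t = seg τ x t - seg τ y t :=
  rfl

lemma seg_congr [TopologicalSpace E] {x y : C(ℝ, E)} {t : ℝ} (h : ∀ r ≤ t, x r = y r) :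
    seg τ x t = seg τ y t := by
  ext θ
  exact h (t + θ.1) (by linarith [θ.2.2])

lemma norm_seg_le_s3 [NormedAddCommGroup E] {y : C(ℝ, E)} {t C : ℝ} (hC : 0 ≤ C)
    (h : ∀ r ∈ Icc (t - τ) t, ‖y r‖ ≤ C) : ‖seg τ y t‖ ≤ C :=
  (ContinuousMap.norm_le _ hC).2 fun θ => h (t + θ.1) ⟨by linarith [θ.2.1], by linarith [θ.2.2]⟩

end Segment

section MeanValue

variable {E : Type*} [NormedAddCommGroup E] [NormedSpace ℝ E]

-- Mathlib's versions also ask for a right derivative at `a`.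
theorem norm_sub_le_of_norm_hasDerivAt_le_Ioo {f f' : ℝ → E} {a b C : ℝ} (hab : a ≤ b)
    (hf : ContinuousOn f (Icc a b)) (hf' : ∀ x ∈ Ioo a b, HasDerivAt f (f' x) x)
    (bound : ∀ x ∈ Ioo a b, ‖f' x‖ ≤ C) : ‖f b - f a‖ ≤ C * (b - a) := by
  rcases hab.eq_or_lt with rfl | hab
  · simp
  have hinner : ∀ a' ∈ Ioo a b, ‖f b - f a'‖ ≤ C * (b - a') := fun a' ha' =>
    norm_image_sub_le_of_norm_deriv_right_le_segment (hf.mono (Icc_subset_Icc_left ha'.1.le))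
      (fun x hx => (hf' x ⟨ha'.1.trans_le hx.1, hx.2⟩).hasDerivWithinAt)
      (fun x hx => bound x ⟨ha'.1.trans_le hx.1, hx.2⟩) b (right_mem_Icc.2 ha'.2.le)
  have hclosed : IsClosed (Icc a b ∩ (fun a' => ‖f b - f a'‖ - C * (b - a')) ⁻¹' Iic 0) :=
    ContinuousOn.preimage_isClosed_of_isClosed (by fun_prop) isClosed_Icc isClosed_Iic
  have hsub : Icc a b ⊆ Icc a b ∩ (fun a' => ‖f b - f a'‖ - C * (b - a')) ⁻¹' Iic 0 :=
    (closure_Ioo hab.ne).symm.subset.trans <| closure_minimal (fun a' ha' =>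
      ⟨Ioo_subset_Icc_self ha', by simpa [sub_nonpos] using hinner a' ha'⟩) hclosed
  simpa [sub_nonpos] using (hsub (left_mem_Icc.2 hab.le)).2

end MeanValue

lemma mul_geom_sum_exp_neg_le {γ δ : ℝ} (hγ : 0 < γ) (hδ : 0 < δ) (hγδ : γ * δ ≤ 1) (N : ℕ) :
    δ * ∑ i ∈ Finset.range N, exp (-(γ * δ)) ^ i ≤ 2 / γ := by
  have hq : exp (-(γ * δ)) < 1 := exp_lt_one_iff.2 (by nlinarith)
  -- `exp (γ δ) ≥ 1 + γ δ` gives `1 - exp (-γ δ) ≥ γ δ / (1 + γ δ) ≥ γ δ / 2`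
  have hgap : γ * δ / 2 ≤ 1 - exp (-(γ * δ)) := by
    have h1 := add_one_le_exp (γ * δ)
    have h2 : exp (-(γ * δ)) * exp (γ * δ) = 1 := by rw [← exp_add]; simp
    nlinarith [exp_pos (-(γ * δ))]
  have hsum : ∑ i ∈ Finset.range N, exp (-(γ * δ)) ^ i ≤ 1 / (1 - exp (-(γ * δ))) := by
    simpa using geom_sum_Ico_le_of_lt_one (m := 0) (n := N) (exp_pos _).le hq
  calc δ * ∑ i ∈ Finset.range N, exp (-(γ * δ)) ^ i ≤ δ * (1 / (1 - exp (-(γ * δ)))) :=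
        mul_le_mul_of_nonneg_left hsum hδ.le
    _ ≤ δ * (1 / (γ * δ / 2)) := by gcongr
    _ = 2 / γ := by field_simp

section Existence

variable {E : Type*} [NormedAddCommGroup E] [NormedSpace ℝ E] {τ : ℝ}

lemma integral_mul_exp_two_mul_integral {ℓ : ℝ → ℝ} (hℓ : Continuous ℓ) (a t : ℝ) :
    ∫ s in a..t, ℓ s * exp (2 * ∫ r in a..s, ℓ r) = (exp (2 * ∫ r in a..t, ℓ r) - 1) / 2 := by
  have hderiv : ∀ s, HasDerivAt (fun s => exp (2 * ∫ r in a..s, ℓ r) / 2)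
      (ℓ s * exp (2 * ∫ r in a..s, ℓ r)) s := fun s =>
    (((hℓ.integral_hasStrictDerivAt a s).hasDerivAt.const_mul 2).exp.div_const 2).congr_deriv
      (by ring)
  rw [intervalIntegral.integral_eq_sub_of_hasDerivAt (fun s _ => hderiv s)
    (Continuous.intervalIntegrable (by fun_prop) a t)]
  simp [sub_div]

-- This is `g` on `(-∞, a]` once `u` vanishes there, as it does at a fixed point of `picardMap`.
noncomputable def weightedExtension (g : C(ℝ, E)) (a : ℝ) (W : C(ℝ, ℝ)) (u : ℝ →ᵇ E) :
    C(ℝ, E) where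
  toFun t := g (min t a) + exp (W (max t a)) • u t
  continuous_toFun := by fun_prop

-- The Picard operator `y ↦ g a + ∫ₐᵗ L s y_s ds` in the variable `u = exp (-W) • (y - g a)`.
noncomputable def picardMap (L : ℝ → C(Icc (-τ) (0 : ℝ), E) →L[ℝ] E) (g : C(ℝ, E)) (a : ℝ)
    (W : C(ℝ, ℝ)) (u : ℝ →ᵇ E) (t : ℝ) : E :=
  exp (-W (max t a)) • ∫ s in a..max t a, L s (seg τ (weightedExtension g a W u) s)

variable {L : ℝ → C(Icc (-τ) (0 : ℝ), E) →L[ℝ] E} {g : C(ℝ, E)} {a : ℝ} {W : C(ℝ, ℝ)}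

lemma weightedExtension_sub_apply (u v : ℝ →ᵇ E) (t : ℝ) :
    weightedExtension g a W u t - weightedExtension g a W v t =
      exp (W (max t a)) • (u t - v t) := by
  simp only [weightedExtension, ContinuousMap.coe_mk, smul_sub]
  abel

lemma norm_seg_weightedExtension_sub_le (hW : Monotone W) (u v : ℝ →ᵇ E) {s : ℝ} (hs : a ≤ s) :
    ‖seg τ (weightedExtension g a W u) s - seg τ (weightedExtension g a W v) s‖ ≤
      exp (W s) * dist u v := by
  rw [← seg_sub]
  refine norm_seg_le_s3 (by positivity) fun r hr => ?_
  rw [ContinuousMap.sub_apply, weightedExtension_sub_apply, norm_smul,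
    norm_of_nonneg (exp_pos _).le, ← dist_eq_norm]
  gcongr
  · exact hW (max_le hr.2 hs)
  · exact dist_coe_le_dist r

lemma norm_seg_weightedExtension_le (hW : Monotone W) (hWa : W a = 0) {Cg : ℝ} (hCg : 0 ≤ Cg)
    (hg : ∀ r ∈ Icc (a - τ) a, ‖g r‖ ≤ Cg) (u : ℝ →ᵇ E) {s : ℝ} (hs : a ≤ s) :
    ‖seg τ (weightedExtension g a W u) s‖ ≤ exp (W s) * (Cg + ‖u‖) := by
  refine norm_seg_le_s3 (by positivity) fun r hr => ?_
  have hgr : ‖g (min r a)‖ ≤ Cg :=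
    hg _ ⟨le_min (by linarith [hr.1]) (by linarith [hr.1, hr.2]), min_le_right _ _⟩
  have hWr : exp (W (max r a)) ≤ exp (W s) := exp_le_exp.2 (hW (max_le hr.2 hs))
  have hWs : 1 ≤ exp (W s) := one_le_exp (hWa ▸ hW hs)
  calc ‖g (min r a) + exp (W (max r a)) • u r‖
      ≤ ‖g (min r a)‖ + exp (W (max r a)) * ‖u r‖ := by
        refine (norm_add_le _ _).trans_eq ?_
        rw [norm_smul, norm_of_nonneg (exp_pos _).le]
    _ ≤ Cg + exp (W s) * ‖u‖ := by gcongr; exact norm_coe_le_norm u r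
    _ ≤ exp (W s) * (Cg + ‖u‖) := by nlinarith

-- For `W = 2 ∫ₐ ‖L‖` the Picard operator becomes a `1/2`-contraction (Bielecki).
lemma exists_bielecki_weight (hL : Continuous L) (a : ℝ) :
    ∃ W : C(ℝ, ℝ), Monotone W ∧ W a = 0 ∧
      ∀ t, ∫ s in a..t, ‖L s‖ * exp (W s) ≤ exp (W t) / 2 := by
  have hℓ := Continuous.norm (E := C(Icc (-τ) (0 : ℝ), E) →L[ℝ] E) hL
  have hWderiv : ∀ t, HasDerivAt (fun t => 2 * ∫ s in a..t, ‖L s‖) (2 * ‖L t‖) t := fun t =>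
    (hℓ.integral_hasStrictDerivAt a t).hasDerivAt.const_mul 2
  refine ⟨⟨_, continuous_iff_continuousAt.2 fun t => (hWderiv t).continuousAt⟩,
    monotone_of_hasDerivAt_nonneg hWderiv fun t => by positivity, by simp, fun t => ?_⟩
  have := integral_mul_exp_two_mul_integral hℓ a t
  simp only [ContinuousMap.coe_mk] at this ⊢
  linarith

lemma exp_neg_mul_norm_integral_le (hL : Continuous L)
    (hWL : ∀ t, ∫ s in a..t, ‖L s‖ * exp (W s) ≤ exp (W t) / 2) {G : ℝ → E} {m C : ℝ}
    (hm : a ≤ m) (hC : 0 ≤ C) (hG : ∀ s, a ≤ s → ‖G s‖ ≤ ‖L s‖ * exp (W s) * C) :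
    exp (-W m) * ‖∫ s in a..m, G s‖ ≤ C / 2 := by
  have hℓ := Continuous.norm (E := C(Icc (-τ) (0 : ℝ), E) →L[ℝ] E) hL
  have hint : ‖∫ s in a..m, G s‖ ≤ exp (W m) / 2 * C := by
    calc ‖∫ s in a..m, G s‖ ≤ ∫ s in a..m, ‖L s‖ * exp (W s) * C :=
          intervalIntegral.norm_integral_le_of_norm_le hm
            (ae_of_all _ fun s hs => hG s hs.1.le)
            ((by fun_prop : Continuous fun s => ‖L s‖ * exp (W s) * C).intervalIntegrable _ _)
      _ ≤ exp (W m) / 2 * C := by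
          rw [intervalIntegral.integral_mul_const]; gcongr; exact hWL m
  calc exp (-W m) * ‖∫ s in a..m, G s‖ ≤ exp (-W m) * (exp (W m) / 2 * C) := by gcongr
    _ = C / 2 := by rw [exp_neg]; field_simp

lemma continuous_picardMap (hL : Continuous L) (u : ℝ →ᵇ E) :
    Continuous (picardMap L g a W u) := by
  have := intervalIntegral.continuous_primitive (μ := volume) (fun b c =>
    (hL.clm_apply (continuous_seg (weightedExtension g a W u))).intervalIntegrable b c) a
  unfold picardMap
  fun_prop

lemma norm_picardMap_le (hL : Continuous L) (hW : Monotone W) (hWa : W a = 0)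
    (hWL : ∀ t, ∫ s in a..t, ‖L s‖ * exp (W s) ≤ exp (W t) / 2) {Cg : ℝ} (hCg : 0 ≤ Cg)
    (hg : ∀ r ∈ Icc (a - τ) a, ‖g r‖ ≤ Cg) (u : ℝ →ᵇ E) (t : ℝ) :
    ‖picardMap L g a W u t‖ ≤ (Cg + ‖u‖) / 2 := by
  rw [picardMap, norm_smul, norm_of_nonneg (exp_pos _).le]
  refine exp_neg_mul_norm_integral_le hL hWL (le_max_right t a) (by positivity) fun s hs => ?_
  calc ‖L s (seg τ (weightedExtension g a W u) s)‖
      ≤ ‖L s‖ * ‖seg τ (weightedExtension g a W u) s‖ := (L s).le_opNorm _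
    _ ≤ ‖L s‖ * (exp (W s) * (Cg + ‖u‖)) := by
        gcongr; exact norm_seg_weightedExtension_le hW hWa hCg hg u hs
    _ = ‖L s‖ * exp (W s) * (Cg + ‖u‖) := by ring

lemma dist_picardMap_le (hL : Continuous L) (hW : Monotone W)
    (hWL : ∀ t, ∫ s in a..t, ‖L s‖ * exp (W s) ≤ exp (W t) / 2) (u v : ℝ →ᵇ E) (t : ℝ) :
    dist (picardMap L g a W u t) (picardMap L g a W v t) ≤ dist u v / 2 := by
  rw [dist_eq_norm, picardMap, picardMap, ← smul_sub, ← intervalIntegral.integral_sub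
    ((hL.clm_apply (continuous_seg _)).intervalIntegrable _ _)
    ((hL.clm_apply (continuous_seg _)).intervalIntegrable _ _), norm_smul,
    norm_of_nonneg (exp_pos _).le]
  refine exp_neg_mul_norm_integral_le hL hWL (le_max_right t a) dist_nonneg fun s hs => ?_
  rw [← map_sub]
  calc ‖L s (seg τ (weightedExtension g a W u) s - seg τ (weightedExtension g a W v) s)‖
      ≤ ‖L s‖ * ‖seg τ (weightedExtension g a W u) s - seg τ (weightedExtension g a W v) s‖ :=
        (L s).le_opNorm _
    _ ≤ ‖L s‖ * (exp (W s) * dist u v) := by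
        gcongr; exact norm_seg_weightedExtension_sub_le hW u v hs
    _ = ‖L s‖ * exp (W s) * dist u v := by ring

theorem exists_delay_solution_eq_on_Iic [CompleteSpace E] (hL : Continuous L) (g : C(ℝ, E))
    (a : ℝ) :
    ∃ y : C(ℝ, E), (∀ t ≤ a, y t = g t) ∧ ∀ t > a, HasDerivAt y (L t (seg τ y t)) t := by
  obtain ⟨W, hW, hWa, hWL⟩ := exists_bielecki_weight hL a
  obtain ⟨Cg, hg⟩ := (isCompact_Icc (a := a - τ) (b := a)).exists_bound_of_continuousOn
    g.continuous.continuousOn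
  have hCg : 0 ≤ max Cg 0 := le_max_right _ _
  replace hg : ∀ r ∈ Icc (a - τ) a, ‖g r‖ ≤ max Cg 0 := fun r hr =>
    (hg r hr).trans (le_max_left _ _)
  let T : (ℝ →ᵇ E) → (ℝ →ᵇ E) := fun u => .ofNormedAddCommGroup (picardMap L g a W u)
    (continuous_picardMap hL u) _ (norm_picardMap_le hL hW hWa hWL hCg hg u)
  have hT : ContractingWith (1 / 2) T := by
    refine ⟨by norm_num, LipschitzWith.of_dist_le_mul fun u v => ?_⟩
    refine (dist_le (by positivity)).2 fun t => ?_
    simpa [T, div_eq_inv_mul] using dist_picardMap_le hL hW hWL u v t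
  set u := hT.fixedPoint T
  have hu : ∀ t, picardMap L g a W u t = u t := fun t =>
    congrArg (· t) (hT.fixedPoint_isFixedPt (f := T))
  have hu_Iic : ∀ t ≤ a, u t = 0 := fun t ht => by
    simp [← hu t, picardMap, max_eq_right ht]
  refine ⟨weightedExtension g a W u, fun t ht => ?_, fun t ht => ?_⟩
  · simp [weightedExtension, hu_Iic t ht, min_eq_left ht]
  have hy : ∀ r ≥ a, weightedExtension g a W u r =
      g a + ∫ s in a..r, L s (seg τ (weightedExtension g a W u) s) := fun r hr => by
    change g (min r a) + exp (W (max r a)) • u r = _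
    rw [← hu r, picardMap, smul_smul, ← exp_add, min_eq_right hr, max_eq_left hr]
    simp
  refine (((hL.clm_apply (continuous_seg _)).integral_hasStrictDerivAt a t).hasDerivAt.const_add
    (g a)).congr_of_eventuallyEq ?_
  filter_upwards [Ioi_mem_nhds ht] with r hr using hy r hr.le

end Existence

section Dissipativity

variable {E : Type*} [NormedAddCommGroup E] [NormedSpace ℝ E] {τ : ℝ}
  {L : ℝ → C(Icc (-τ) (0 : ℝ), E) →L[ℝ] E}

def IsExpStable (L : ℝ → C(Icc (-τ) (0 : ℝ), E) →L[ℝ] E) (k γ : ℝ) : Prop :=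
  ∀ t₀ ≥ (0 : ℝ), ∀ y : C(ℝ, E), (∀ t > t₀, HasDerivAt (fun s => y s) (L t (seg τ y t)) t) →
    ∀ t ≥ t₀, ‖y t‖ ≤ k * exp (-γ * (t - t₀)) * ‖seg τ y t₀‖

lemma IsExpStable.norm_sub_le {k γ : ℝ} (hstab : IsExpStable L k γ) (hk : 0 ≤ k)
    {y₁ y₂ : C(ℝ, E)} {t₀ D : ℝ} (ht₀ : 0 ≤ t₀) (hD : 0 ≤ D)
    (hy₁ : ∀ t > t₀, HasDerivAt y₁ (L t (seg τ y₁ t)) t)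
    (hy₂ : ∀ t > t₀, HasDerivAt y₂ (L t (seg τ y₂ t)) t)
    (hclose : ∀ r ≤ t₀, ‖y₁ r - y₂ r‖ ≤ D) {t : ℝ} (ht : t₀ ≤ t) :
    ‖y₁ t - y₂ t‖ ≤ k * exp (-γ * (t - t₀)) * D := by
  refine (hstab t₀ ht₀ (y₁ - y₂) (fun r hr => ?_) t ht).trans ?_
  · rw [seg_sub, map_sub]
    exact (hy₁ r hr).sub (hy₂ r hr)
  · gcongr
    exact norm_seg_le_s3 hD fun r hr => hclose r hr.2

theorem norm_sub_le_of_hasDerivAt_perturbed {F : ℝ → E} {x y : C(ℝ, E)} {a b B K : ℝ}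
    (hab : a ≤ b) (hB : 0 ≤ B) (hK : 0 ≤ K) (hBab : B * (b - a) ≤ 1 / 2)
    (hL : ∀ r ∈ Ioo a b, ‖L r‖ ≤ B) (hF : ∀ r ∈ Ioo a b, ‖F r‖ ≤ K)
    (hx : ∀ r ∈ Ioo a b, HasDerivAt x (L r (seg τ x r) + F r) r)
    (hy : ∀ r ∈ Ioo a b, HasDerivAt y (L r (seg τ y r)) r) (hxy : ∀ r ≤ a, x r = y r) :
    ∀ r ≤ b, ‖x r - y r‖ ≤ 2 * K * (b - a) := by
  set d := x - y
  obtain ⟨r₀, hr₀, hmax⟩ := isCompact_Icc.exists_isMaxOn (nonempty_Icc.2 hab)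
    (continuous_norm.comp d.continuous).continuousOn
  set m := ‖d r₀‖
  have hd : ∀ r ≤ b, ‖d r‖ ≤ m := fun r hr => by
    rcases le_or_gt r a with h | h
    · rw [show d r = 0 by simp [d, hxy r h], norm_zero]
      exact norm_nonneg _
    · exact hmax ⟨h.le, hr⟩
  have hsub : Ioo a r₀ ⊆ Ioo a b := Ioo_subset_Ioo_right hr₀.2
  have hderiv : ∀ r ∈ Ioo a r₀, HasDerivAt d (L r (seg τ d r) + F r) r := fun r hr => by
    rw [show L r (seg τ d r) + F r = L r (seg τ x r) + F r - L r (seg τ y r) by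
      rw [seg_sub, map_sub]; abel]
    exact (hx r (hsub hr)).sub (hy r (hsub hr))
  have hbound : ∀ r ∈ Ioo a r₀, ‖L r (seg τ d r) + F r‖ ≤ B * m + K := fun r hr => by
    have hseg : ‖seg τ d r‖ ≤ m :=
      norm_seg_le_s3 (norm_nonneg _) fun s hs => hd s (hs.2.trans (hr.2.le.trans hr₀.2))
    calc ‖L r (seg τ d r) + F r‖ ≤ ‖L r‖ * ‖seg τ d r‖ + ‖F r‖ :=
          (norm_add_le _ _).trans (add_le_add_left ((L r).le_opNorm _) _)
      _ ≤ B * m + K := by gcongr; exacts [hL r (hsub hr), hF r (hsub hr)]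
  have hmvt := norm_sub_le_of_norm_hasDerivAt_le_Ioo hr₀.1 d.continuous.continuousOn hderiv hbound
  rw [show d a = 0 by simp [d, hxy a le_rfl], sub_zero] at hmvt
  -- `m ≤ (B m + K) δ ≤ m / 2 + K δ` with `δ = b - a`
  have hm : m ≤ 2 * K * (b - a) := by
    nlinarith [mul_nonneg (add_nonneg (mul_nonneg hB (norm_nonneg (d r₀))) hK)
      (sub_nonneg.2 hr₀.2), norm_nonneg (d r₀)]
  exact fun r hr => (hd r hr).trans hm

lemma IsExpStable.dist_le_of_chain {k γ : ℝ} (hstab : IsExpStable L k γ) (hk : 0 ≤ k)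
    {x : C(ℝ, E)} {c : ℕ → C(ℝ, E)} {t δ D : ℝ} {N : ℕ} (hδ : 0 < δ) (hD : 0 ≤ D)
    (hN : 0 ≤ t - N * δ) (hc_eq : ∀ i : ℕ, ∀ r ≤ t - i * δ, c i r = x r)
    (hc_sol : ∀ i : ℕ, ∀ r > t - i * δ, HasDerivAt (c i) (L r (seg τ (c i) r)) r)
    (hstep : ∀ i < N, ∀ r ≤ t - i * δ, ‖x r - c (i + 1) r‖ ≤ D) :
    dist (c 0 t) (c N t) ≤ k * D * ∑ i ∈ Finset.range N, exp (-(γ * δ)) ^ i := by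
  rw [Finset.mul_sum]
  refine dist_le_range_sum_of_dist_le (f := fun i => c i t) N fun {i} hi => ?_
  have hiN : (i : ℝ) + 1 ≤ N := by exact_mod_cast hi
  have hsol := hc_sol (i + 1)
  push_cast at hsol
  have hdiff := hstab.norm_sub_le hk (t₀ := t - i * δ) (by nlinarith) hD (hc_sol i)
    (fun r hr => hsol r (by linarith)) (fun r hr => by rw [hc_eq i r hr]; exact hstep i hi r hr)
    (t := t) (by nlinarith [(i.cast_nonneg : (0 : ℝ) ≤ i)])
  rw [show -γ * (t - (t - i * δ)) = i * (-(γ * δ)) by ring, exp_nat_mul] at hdiff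
  rw [dist_eq_norm]
  linarith

theorem IsExpStable.norm_le_of_perturbed [CompleteSpace E] {k γ K : ℝ}
    (hstab : IsExpStable L k γ) (hL : Continuous L) (hk : 0 ≤ k) (hγ : 0 < γ) (hK : 0 ≤ K)
    {F : ℝ → E} (hF : ∀ t > 0, ‖F t‖ ≤ K) {x : C(ℝ, E)}
    (hx : ∀ t > 0, HasDerivAt x (L t (seg τ x t) + F t) t) {t : ℝ} (ht : 0 < t) :
    ‖x t‖ ≤ k * exp (-γ * t) * ‖seg τ x 0‖ + 4 * k * K / γ := by
  obtain ⟨B, hB⟩ := (isCompact_Icc (a := 0) (b := t)).exists_bound_of_continuousOn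
    (E := C(Icc (-τ) (0 : ℝ), E) →L[ℝ] E) hL.continuousOn
  replace hB : ∀ r ∈ Icc 0 t, ‖L r‖ ≤ max B 0 := fun r hr => (hB r hr).trans (le_max_left _ _)
  obtain ⟨N, hN⟩ := exists_nat_gt (t * (γ + 2 * max B 0))
  have hN0 : (0 : ℝ) < N := (by positivity : 0 < t * (γ + 2 * max B 0)).trans hN
  set δ := t / N with hδ_def
  have hδ0 : 0 < δ := by positivity
  have hNδ : N * δ = t := by rw [hδ_def]; field_simp
  have hδ : δ * (γ + 2 * max B 0) ≤ 1 := by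
    rw [hδ_def, div_mul_eq_mul_div, div_le_one hN0]; exact hN.le
  choose c hc_eq hc_sol using fun i : ℕ => exists_delay_solution_eq_on_Iic hL x (t - i * δ)
  have hstep : ∀ i < N, ∀ r ≤ t - i * δ, ‖x r - c (i + 1) r‖ ≤ 2 * K * δ := fun i hi => by
    have hiN : (i : ℝ) + 1 ≤ N := by exact_mod_cast hi
    have hsol := hc_sol (i + 1)
    have heq := hc_eq (i + 1)
    push_cast at hsol heq
    have hlen : t - i * δ - (t - (i + 1) * δ) = δ := by ring
    have hclose := norm_sub_le_of_hasDerivAt_perturbed (a := t - (i + 1) * δ) (b := t - i * δ)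
      (by linarith) (le_max_right B 0) hK (by rw [hlen]; nlinarith [le_max_right B 0])
      (fun r hr => hB r ⟨by nlinarith [hr.1], by nlinarith [hr.2, (i.cast_nonneg : (0 : ℝ) ≤ i)]⟩)
      (fun r hr => hF r (by nlinarith [hr.1])) (fun r hr => hx r (by nlinarith [hr.1]))
      (fun r hr => hsol r hr.1) (fun r hr => (heq r hr).symm)
    rwa [hlen] at hclose
  have hsum : dist (c 0 t) (c N t) ≤ 4 * k * K / γ :=
    calc dist (c 0 t) (c N t) ≤ k * (2 * K * δ) * ∑ i ∈ Finset.range N, exp (-(γ * δ)) ^ i :=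
          hstab.dist_le_of_chain hk hδ0 (by positivity) (by rw [hNδ, sub_self]) hc_eq hc_sol hstep
      _ = 2 * k * K * (δ * ∑ i ∈ Finset.range N, exp (-(γ * δ)) ^ i) := by ring
      _ ≤ 2 * k * K * (2 / γ) := by
          gcongr; exact mul_geom_sum_exp_neg_le hγ hδ0 (by nlinarith [le_max_right B 0]) N
      _ = 4 * k * K / γ := by ring
  have hcN : ‖c N t‖ ≤ k * exp (-γ * t) * ‖seg τ x 0‖ := by
    have h0 : t - N * δ = 0 := by rw [hNδ, sub_self]
    have := hstab 0 le_rfl (c N) (fun r hr => hc_sol N r (by rwa [h0])) t ht.le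
    rwa [sub_zero, seg_congr (fun r hr => hc_eq N r (by rwa [h0]))] at this
  calc ‖x t‖ = ‖c 0 t‖ := by rw [hc_eq 0 t (by simp)]
    _ ≤ ‖c N t‖ + dist (c 0 t) (c N t) := by
        rw [dist_eq_norm]; exact norm_le_norm_add_norm_sub' _ _
    _ ≤ k * exp (-γ * t) * ‖seg τ x 0‖ + 4 * k * K / γ := add_le_add hcN hsum

end Dissipativity

theorem perturbed_dissipative_general
    (n : ℕ) (τ : ℝ)
    (L : ℝ → (C(Set.Icc (-τ) (0 : ℝ), Fin n → ℝ) →L[ℝ] (Fin n → ℝ)))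
    (hL_cont : ContinuousOn L (Set.Ici (0 : ℝ)))
    -- exponential asymptotic stability of the linear system
    (hstab : ∃ k > 0, ∃ γ > 0, ∀ t₀ ≥ (0 : ℝ), ∀ y : C(ℝ, Fin n → ℝ),
      (∀ t > t₀, HasDerivAt (fun s => y s) (L t (seg τ y t)) t) →
      ∀ t ≥ t₀, ‖y t‖ ≤ k * Real.exp (-γ * (t - t₀)) * ‖seg τ y t₀‖)
    (S : Set C(Set.Icc (-τ) (0 : ℝ), Fin n → ℝ))
    (f : ℝ → C(Set.Icc (-τ) (0 : ℝ), Fin n → ℝ) → (Fin n → ℝ))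
    -- boundedness of f on [0,∞) × S
    (K : ℝ) (hK : 0 ≤ K) (hfK : ∀ t ≥ (0 : ℝ), ∀ φ ∈ S, ‖f t φ‖ ≤ K) :
    ∃ M > 0, ∀ x : C(ℝ, Fin n → ℝ),
      (∀ t > (0 : ℝ), HasDerivAt (fun s => x s) (L t (seg τ x t) + f t (seg τ x t)) t) →
      (∀ t ≥ (0 : ℝ), seg τ x t ∈ S) →
      -- limsup_{t→∞} ‖x(t)‖ ≤ M
      ∀ ε > 0, ∀ᶠ t in Filter.atTop, ‖x t‖ ≤ M + ε := by
  obtain ⟨k, hk, γ, hγ, hlin⟩ := hstab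
  refine ⟨4 * k * K / γ + 1, by positivity, fun x hx hxS ε _ => ?_⟩
  -- `L (max t 0)` is continuous on all of `ℝ` and agrees with `L` wherever the equations live
  set L' := fun t => L (max t 0)
  have hL' : Continuous L' :=
    hL_cont.comp_continuous (continuous_id.max continuous_const) fun t => le_max_right t 0
  have hstab' : IsExpStable L' k γ := fun t₀ ht₀ y hy => hlin t₀ ht₀ y fun t ht => by
    simpa [L', max_eq_left (ht₀.trans ht.le)] using hy t ht
  have hbound (t : ℝ) (ht : 0 < t) :
      ‖x t‖ ≤ k * exp (-γ * t) * ‖seg τ x 0‖ + 4 * k * K / γ :=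
    hstab'.norm_le_of_perturbed hL' hk.le hγ hK (F := fun t => f t (seg τ x t))
      (fun t ht => hfK t ht.le _ (hxS t ht.le))
      (fun t ht => by simpa [L', max_eq_left ht.le] using hx t ht) ht
  have hdecay : Tendsto (fun t => k * exp (-γ * t) * ‖seg τ x 0‖) atTop (𝓝 0) := by
    have := tendsto_exp_neg_atTop_nhds_zero.comp (tendsto_id.const_mul_atTop hγ)
    simpa [Function.comp_def, neg_mul] using (this.const_mul k).mul_const ‖seg τ x 0‖
  filter_upwards [hdecay.eventually_lt_const one_pos, eventually_gt_atTop 0] with t hsmall ht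
  linarith [hbound t ht]

/-- If the linear delay system `y'(t) = L(t) y_t` is exponentially asymptotically stable
and `f` is continuous and bounded on `[0,∞) × S`, then the perturbed system
`x'(t) = L(t) x_t + f(t, x_t)` is dissipative: all its solutions with segments in `S`
satisfy `limsup_{t→∞} |x(t)| ≤ M` for a uniform `M > 0`. -/
theorem perturbed_dissipative
    (n : ℕ) (hn : 1 ≤ n) (τ : ℝ) (hτ : 0 ≤ τ)
    (L : ℝ → (C(Set.Icc (-τ) (0 : ℝ), Fin n → ℝ) →L[ℝ] (Fin n → ℝ)))
    (hL_cont : ContinuousOn L (Set.Ici (0 : ℝ)))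
    -- exponential asymptotic stability of the linear system
    (hstab : ∃ k > 0, ∃ γ > 0, ∀ t₀ ≥ (0 : ℝ), ∀ y : C(ℝ, Fin n → ℝ),
      (∀ t > t₀, HasDerivAt (fun s => y s) (L t (seg τ y t)) t) →
      ∀ t ≥ t₀, ‖y t‖ ≤ k * Real.exp (-γ * (t - t₀)) * ‖seg τ y t₀‖)
    (S : Set C(Set.Icc (-τ) (0 : ℝ), Fin n → ℝ))
    (f : ℝ → C(Set.Icc (-τ) (0 : ℝ), Fin n → ℝ) → (Fin n → ℝ))
    (hf_cont : ContinuousOn (fun p : ℝ × C(Set.Icc (-τ) (0 : ℝ), Fin n → ℝ) => f p.1 p.2)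
      (Set.Ici (0 : ℝ) ×ˢ S))
    -- boundedness of f on [0,∞) × S
    (K : ℝ) (hK : 0 ≤ K) (hfK : ∀ t ≥ (0 : ℝ), ∀ φ ∈ S, ‖f t φ‖ ≤ K) :
    ∃ M > 0, ∀ x : C(ℝ, Fin n → ℝ),
      (∀ t > (0 : ℝ), HasDerivAt (fun s => x s) (L t (seg τ x t) + f t (seg τ x t)) t) →
      (∀ t ≥ (0 : ℝ), seg τ x t ∈ S) →
      -- limsup_{t→∞} ‖x(t)‖ ≤ M
      ∀ ε > 0, ∀ᶠ t in Filter.atTop, ‖x t‖ ≤ M + ε :=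
  perturbed_dissipative_general n τ L hL_cont hstab S f K hK hfK
end

section
/- Let μ > 0, τ̄ > 0 and C > τ̄, and let τ : [0,∞) → (0,τ̄] be continuous. Define a(t) := μ·(t − τ(t) + C)·(t + C + 1)/τ(t) and d(t) := 1/((t + C)(t + 1 + C)) + a(t)·(t − τ(t) + C + 1)·(t + C)/((t − τ(t) + C)·(t + C + 1)) for t ≥ 0. Then: (a) the function φ(t) = 1 + 1/(t + C), defined for t ≥ −τ̄, satisfies the scalar linear delay equation φ'(t) = −d(t)·φ(t) + a(t)·φ(t − τ(t)) for all t > 0; and (b) d(t) − a(t) ≥ μ for all t ≥ 0. In particular, the equation admits a positive solution converging to 1 (so it is not asymptotically stable) even though the condition d(t) − a(t) ≥ μ > 0 (hypothesis (H2) in the scalar case) holds for all t ≥ 0. -/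
/-!
For `φ(t) = 1 + 1/(t + C)` one has `d(t) φ(t) = 1/(t + C)² + a(t) φ(t - τ(t))` whatever `a` is,
so `φ' = -1/(t + C)²` is exactly the right-hand side of the delay equation. Moreover
`(t - τ + C + 1)(t + C) - (t - τ + C)(t + C + 1) = τ`, which cancels the `τ` in the denominator
of `a` and leaves `d(t) - a(t) = μ + 1/((t + C)(t + 1 + C)) ≥ μ`.
-/

section

variable {t τ C : ℝ}

lemma hasDerivAt_one_add_one_div_add_const (hu : t + C ≠ 0) :
    HasDerivAt (fun s => 1 + 1 / (s + C)) (-1 / (t + C) ^ 2) t := by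
  simpa [one_div] using (((hasDerivAt_id t).add_const C).inv hu).const_add (1 : ℝ)

lemma delay_rhs_eq_neg_one_div_sq (A : ℝ) (hu : t + C ≠ 0) (hu₁ : t + C + 1 ≠ 0)
    (hv : t - τ + C ≠ 0) :
    -(1 / ((t + C) * (t + 1 + C)) + A * ((t - τ + C + 1) * (t + C)) / ((t - τ + C) * (t + C + 1)))
        * (1 + 1 / (t + C)) + A * (1 + 1 / (t - τ + C)) = -1 / (t + C) ^ 2 := by
  rw [add_right_comm t 1 C]
  field_simp
  ring

lemma delay_coeff_mul_sub_self_eq (μ : ℝ) (hτ : τ ≠ 0) (hu₁ : t + C + 1 ≠ 0) (hv : t - τ + C ≠ 0) :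
    μ * ((t - τ + C) * (t + C + 1)) / τ * ((t - τ + C + 1) * (t + C)) / ((t - τ + C) * (t + C + 1))
      - μ * ((t - τ + C) * (t + C + 1)) / τ = μ := by
  field_simp
  ring

end

lemma tendsto_one_add_one_div_add_const_atTop (C : ℝ) :
    Filter.Tendsto (fun t : ℝ => 1 + 1 / (t + C)) Filter.atTop (nhds 1) := by
  have hinv := tendsto_inv_atTop_zero.comp
    (Filter.tendsto_atTop_add_const_right _ C Filter.tendsto_id)
  simpa [one_div, Function.comp_def] using hinv.const_add (1 : ℝ)

theorem GH_counterexample_general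
    (μ τb C : ℝ) (hC : τb < C)
    (τf : ℝ → ℝ)
    (hτf_mem : ∀ t ≥ (0 : ℝ), 0 < τf t ∧ τf t ≤ τb)
    (a d : ℝ → ℝ)
    (ha_def : ∀ t, a t = μ * ((t - τf t + C) * (t + C + 1)) / τf t)
    (hd_def : ∀ t, d t = 1 / ((t + C) * (t + 1 + C))
      + a t * ((t - τf t + C + 1) * (t + C)) / ((t - τf t + C) * (t + C + 1))) :
    -- (a): φ(t) = 1 + 1/(t+C) solves the delay equation for t > 0
    (∀ t > (0 : ℝ), HasDerivAt (fun s => 1 + 1 / (s + C))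
      (-(d t) * (1 + 1 / (t + C)) + a t * (1 + 1 / (t - τf t + C))) t)
    -- (b): d(t) - a(t) ≥ μ for all t ≥ 0
    ∧ (∀ t ≥ (0 : ℝ), μ ≤ d t - a t)
    -- the solution is positive and converges to 1
    ∧ (∀ t ≥ -τb, 0 < 1 + 1 / (t + C))
    ∧ Filter.Tendsto (fun t : ℝ => 1 + 1 / (t + C)) Filter.atTop (nhds 1) := by
  have hv : ∀ t ≥ (0 : ℝ), 0 < t - τf t + C := fun t ht => by linarith [(hτf_mem t ht).2]
  have hu : ∀ t ≥ (0 : ℝ), 0 < t + C := fun t ht => by linarith [hv t ht, (hτf_mem t ht).1]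
  refine ⟨fun t ht => ?_, fun t ht => ?_, fun t ht => ?_, tendsto_one_add_one_div_add_const_atTop C⟩
  · rw [hd_def]
    exact (hasDerivAt_one_add_one_div_add_const (hu t ht.le).ne').congr_deriv
      (delay_rhs_eq_neg_one_div_sq (a t) (hu t ht.le).ne' (by linarith [hu t ht.le])
        (hv t ht.le).ne').symm
  · have hu₀ := hu t ht
    have hcorr : 0 ≤ 1 / ((t + C) * (t + 1 + C)) :=
      one_div_nonneg.2 (mul_nonneg hu₀.le (by linarith))
    have hcoeff := delay_coeff_mul_sub_self_eq μ (hτf_mem t ht).1.ne' (by linarith) (hv t ht).ne'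
    rw [hd_def, ha_def]
    linarith
  · have : 0 < t + C := by linarith
    positivity

/-- Counter-example (Example 3.3 / Győri–Horváth): for the scalar linear delay equation
`y'(t) = -d(t) y(t) + a(t) y(t - τ(t))` with the indicated unbounded coefficient `a(t)`,
the function `φ(t) = 1 + 1/(t+C)` is a positive solution converging to `1` (so the
equation is not asymptotically stable), although `d(t) - a(t) ≥ μ > 0` (scalar (H2)). -/
theorem GH_counterexample
    (μ τb C : ℝ) (hμ : 0 < μ) (hτb : 0 < τb) (hC : τb < C)
    (τf : ℝ → ℝ) (hτf_cont : ContinuousOn τf (Set.Ici 0))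
    (hτf_mem : ∀ t ≥ (0 : ℝ), 0 < τf t ∧ τf t ≤ τb)
    (a d : ℝ → ℝ)
    (ha_def : ∀ t, a t = μ * ((t - τf t + C) * (t + C + 1)) / τf t)
    (hd_def : ∀ t, d t = 1 / ((t + C) * (t + 1 + C))
      + a t * ((t - τf t + C + 1) * (t + C)) / ((t - τf t + C) * (t + C + 1))) :
    -- (a): φ(t) = 1 + 1/(t+C) solves the delay equation for t > 0
    (∀ t > (0 : ℝ), HasDerivAt (fun s => 1 + 1 / (s + C))
      (-(d t) * (1 + 1 / (t + C)) + a t * (1 + 1 / (t - τf t + C))) t)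
    -- (b): d(t) - a(t) ≥ μ for all t ≥ 0
    ∧ (∀ t ≥ (0 : ℝ), μ ≤ d t - a t)
    -- the solution is positive and converges to 1
    ∧ (∀ t ≥ -τb, 0 < 1 + 1 / (t + C))
    ∧ Filter.Tendsto (fun t : ℝ => 1 + 1 / (t + C)) Filter.atTop (nhds 1) :=
  GH_counterexample_general μ τb C hC τf hτf_mem a d ha_def hd_def
end

section
/- Let τ̄ > 0, C > max(τ̄, 1), μ > 0 and μ₁ > μ + 1/C, and let τ : [0,∞) → (0,τ̄] be continuous. Define a(t) := μ·(t + C − τ(t))/τ(t), β(t) := μ₁·(t + C)/(t + C − 1), d(t) := a(t) + (β(t) + 1)/(t + C) + μ for t ≥ 0, and h : [0,∞) → [0,∞) by h(x) = x² for 0 ≤ x ≤ 1 and h(x) = 1 for x ≥ 1. Then: (a) the function φ(t) = 1/(t + C), defined for t ≥ −τ̄, satisfies the scalar delay equation φ'(t) = −d(t)·φ(t) + a(t)·φ(t − τ(t)) + β(t)·h(φ(t)) for all t > 0, so the equation is not uniformly persistent; and (b) d(t) − a(t) > μ and β(t) − (d(t) − a(t)) = μ₁ − μ − 1/(t + C)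 ≥ μ₁ − μ − 1/C > 0 for all t ≥ 0 (so hypotheses (H2), (H5) and (H5*) hold in the scalar case, while h fails hypothesis (H4) because h'(0⁺) = 0). -/
/-!
The solution is `φ(t) = 1/(t+C)`, with `φ' = -φ²`. The coefficient `a` is tuned so that
`a(t) φ(t - τ(t)) = μ/τ(t)` cancels the delay against the part `μ/τ(t) - μφ(t)` of `a(t) φ(t)`;
what is left of the right-hand side is `-(β + 1) φ² + β h(φ) = -φ²`, because `φ ≤ 1/C < 1`
puts `φ` in the range where `h(x) = x²`. The inequalities of (b) follow from
`d - a = (β + 1)/(t + C) + μ` and `β (1 - 1/(t + C)) = μ₁`.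
-/

open Filter Set Topology

theorem hasDerivAt_one_div_add_const {C t : ℝ} (ht : t + C ≠ 0) :
    HasDerivAt (fun s => 1 / (s + C)) (-(1 / (t + C)) ^ 2) t := by
  simpa [one_div, Pi.inv_def, neg_div, inv_pow] using ((hasDerivAt_id t).add_const C).inv ht

theorem tendsto_one_div_add_const_atTop_nhds_zero (C : ℝ) :
    Tendsto (fun t : ℝ => 1 / (t + C)) atTop (𝓝 0) := by
  simpa [one_div, Pi.inv_def] using (tendsto_atTop_add_const_right _ C tendsto_id).inv_tendsto_atTop

theorem hasDerivWithinAt_Ici_zero_of_eqOn_sq {h : ℝ → ℝ} (hsq : EqOn h (· ^ 2) (Icc 0 1)) :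
    HasDerivWithinAt h 0 (Ici 0) 0 := by
  have hpow : HasDerivWithinAt (· ^ 2) (0 : ℝ) (Ici 0) 0 := by
    simpa using (hasDerivAt_pow 2 (0 : ℝ)).hasDerivWithinAt
  have heq : h =ᶠ[𝓝[≥] 0] (· ^ 2) := by
    filter_upwards [nhdsWithin_le_nhds (Iio_mem_nhds one_pos), self_mem_nhdsWithin]
      with x hx1 hx0 using hsq ⟨hx0, hx1.le⟩
  exact hpow.congr_of_eventuallyEq heq (by simpa using hsq ⟨le_rfl, zero_le_one⟩)

theorem delay_rhs_eq_neg_sq (μ β τ x : ℝ) (hτ : τ ≠ 0) (hxτ : x - τ ≠ 0) (hx : x ≠ 0) :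
    -(μ * (x - τ) / τ + (β + 1) / x + μ) * (1 / x) + μ * (x - τ) / τ * (1 / (x - τ))
      + β * (1 / x) ^ 2 = -(1 / x) ^ 2 := by
  field_simp
  ring

theorem mul_div_sub_one_sub_add_one_div (μ₁ x : ℝ) (hx : x ≠ 0) (hx1 : x - 1 ≠ 0) :
    μ₁ * x / (x - 1) - (μ₁ * x / (x - 1) + 1) / x = μ₁ - 1 / x := by
  field_simp
  ring

theorem not_persistent_counterexample_general
    (τb C μ μ₁ : ℝ) (hC : max τb 1 < C) (hμ : 0 < μ)
    (hμ₁ : μ + 1 / C < μ₁)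
    (τf : ℝ → ℝ)
    (hτf_mem : ∀ t ≥ (0 : ℝ), 0 < τf t ∧ τf t ≤ τb)
    (a β d h : ℝ → ℝ)
    (ha_def : ∀ t, a t = μ * (t + C - τf t) / τf t)
    (hβ_def : ∀ t, β t = μ₁ * (t + C) / (t + C - 1))
    (hd_def : ∀ t, d t = a t + (β t + 1) / (t + C) + μ)
    (hh_def : ∀ x ≥ (0 : ℝ), h x = if x ≤ 1 then x ^ 2 else 1) :
    -- (a): φ(t) = 1/(t+C) solves the equation for t > 0, and tends to 0
    (∀ t > (0 : ℝ), HasDerivAt (fun s => 1 / (s + C))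
      (-(d t) * (1 / (t + C)) + a t * (1 / (t - τf t + C)) + β t * h (1 / (t + C))) t)
    ∧ Filter.Tendsto (fun t : ℝ => 1 / (t + C)) Filter.atTop (nhds 0)
    -- (b): (H2), (H5), (H5*)-type inequalities hold ...
    ∧ (∀ t ≥ (0 : ℝ), μ < d t - a t)
    ∧ (∀ t ≥ (0 : ℝ), β t - (d t - a t) = μ₁ - μ - 1 / (t + C))
    ∧ (0 < μ₁ - μ - 1 / C)
    ∧ (∀ t ≥ (0 : ℝ), μ₁ - μ - 1 / C ≤ μ₁ - μ - 1 / (t + C))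
    -- ... while h fails (H4): h'(0⁺) = 0
    ∧ HasDerivWithinAt h 0 (Set.Ici 0) 0 := by
  obtain ⟨hτC, hC1⟩ := max_lt_iff.mp hC
  have hsq : EqOn h (· ^ 2) (Icc 0 1) := fun x hx => by simp [hh_def x hx.1, hx.2]
  have hda : ∀ t, d t - a t = (β t + 1) / (t + C) + μ := fun t => by rw [hd_def]; ring
  have hφ_le : ∀ t ≥ (0 : ℝ), 1 / (t + C) ≤ 1 / C := fun t ht =>
    one_div_le_one_div_of_le (by linarith) (by linarith)
  refine ⟨fun t ht => ?_, tendsto_one_div_add_const_atTop_nhds_zero C, fun t ht => ?_,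
    fun t ht => ?_, by linarith, fun t ht => by linarith [hφ_le t ht],
    hasDerivWithinAt_Ici_zero_of_eqOn_sq hsq⟩
  · obtain ⟨hτ0, hτle⟩ := hτf_mem t ht.le
    have hφ_mem : 1 / (t + C) ∈ Icc (0 : ℝ) 1 :=
      ⟨by positivity, (hφ_le t ht.le).trans ((div_le_one (by linarith)).mpr hC1.le)⟩
    rw [hd_def, ha_def, hsq hφ_mem, show t - τf t + C = t + C - τf t by ring,
      delay_rhs_eq_neg_sq _ _ _ _ hτ0.ne' (by linarith) (by linarith)]
    exact hasDerivAt_one_div_add_const (by linarith)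
  · have hβ_pos : 0 < β t := by
      rw [hβ_def]
      have : 0 < μ₁ := by linarith [one_div_pos.mpr (zero_lt_one.trans hC1)]
      exact div_pos (mul_pos this (by linarith)) (by linarith)
    rw [hda]
    linarith [div_pos (by linarith : 0 < β t + 1) (by linarith : 0 < t + C)]
  · rw [hda, hβ_def]
    linarith [mul_div_sub_one_sub_add_one_div μ₁ (t + C) (by linarith) (by linarith)]

/-- Counter-example (Example 3.4): the scalar delay equation
`x'(t) = -d(t) x(t) + a(t) x(t - τ(t)) + β(t) h(x(t))` with `h(x) = x²` for `x ≤ 1`,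
`h(x) = 1` for `x ≥ 1`, admits the solution `φ(t) = 1/(t+C)` tending to `0`, so it is
not uniformly persistent, even though (H2), (H5) and (H5*) hold; here (H4) fails since
`h'(0⁺) = 0`. -/
theorem not_persistent_counterexample
    (τb C μ μ₁ : ℝ) (hτb : 0 < τb) (hC : max τb 1 < C) (hμ : 0 < μ)
    (hμ₁ : μ + 1 / C < μ₁)
    (τf : ℝ → ℝ) (hτf_cont : ContinuousOn τf (Set.Ici 0))
    (hτf_mem : ∀ t ≥ (0 : ℝ), 0 < τf t ∧ τf t ≤ τb)
    (a β d h : ℝ → ℝ)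
    (ha_def : ∀ t, a t = μ * (t + C - τf t) / τf t)
    (hβ_def : ∀ t, β t = μ₁ * (t + C) / (t + C - 1))
    (hd_def : ∀ t, d t = a t + (β t + 1) / (t + C) + μ)
    (hh_def : ∀ x ≥ (0 : ℝ), h x = if x ≤ 1 then x ^ 2 else 1) :
    -- (a): φ(t) = 1/(t+C) solves the equation for t > 0, and tends to 0
    (∀ t > (0 : ℝ), HasDerivAt (fun s => 1 / (s + C))
      (-(d t) * (1 / (t + C)) + a t * (1 / (t - τf t + C)) + β t * h (1 / (t + C))) t)
    ∧ Filter.Tendsto (fun t : ℝ => 1 / (t + C)) Filter.atTop (nhds 0)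
    -- (b): (H2), (H5), (H5*)-type inequalities hold ...
    ∧ (∀ t ≥ (0 : ℝ), μ < d t - a t)
    ∧ (∀ t ≥ (0 : ℝ), β t - (d t - a t) = μ₁ - μ - 1 / (t + C))
    ∧ (0 < μ₁ - μ - 1 / C)
    ∧ (∀ t ≥ (0 : ℝ), μ₁ - μ - 1 / C ≤ μ₁ - μ - 1 / (t + C))
    -- ... while h fails (H4): h'(0⁺) = 0
    ∧ HasDerivWithinAt h 0 (Set.Ici 0) 0 :=
  not_persistent_counterexample_general τb C μ μ₁ hC hμ hμ₁ τf hτf_mem a β d h ha_def hβ_def hd_def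
    hh_def
end
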